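/- arXiv:0909.5175 — 5 statements merged into one kernel-verified Lean document; each statement's English description precedes it below -/
import Mathlib

section
/- Let f_1, …, f_n : {-1,1}^n → {-1,1} be Boolean functions such that each f_i does not depend on its i-th input coordinate x_i. Then for X uniform on {-1,1}^n, ( E_X[ | Σ_{i=1}^n X_i · f_i(X_{-i}) | ] )² ≤ 2 · Σ_{i=1}^n AS(f_i) + n, where f_i(X_{-i}) denotes the value of f_i on X (which depends only on the coordinates of X other than the i-th). -/
open Finset MeasureTheory ProbabilityTheory
open scoped Classical

noncomputable section

/-- The ±1 real value of a Boolean bit (`true ↦ 1`, `false ↦ -1`). -/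
def pmOne (b : Bool) : ℝ := if b then 1 else -1

/-- Noise sensitivity at rate `δ` of a Boolean function on the hypercube `{-1,1}^n`:
`Pr[f(X) ≠ f(Z)]` where `X` is uniform and `Z` flips each coordinate of `X`
independently with probability `δ`. -/
def noiseSens {n : ℕ} (δ : ℝ) (f : (Fin n → Bool) → Bool) : ℝ :=
  (1 / 2 ^ n : ℝ) * ∑ x : Fin n → Bool, ∑ s : Fin n → Bool,
    (∏ i, if s i then δ else 1 - δ) * (if f x ≠ f (fun i => xor (s i) (x i)) then 1 else 0)

/-- Influence of the `i`-th variable: `Pr[f(X) ≠ f(X^{(i)})]`. -/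
def influence {n : ℕ} (f : (Fin n → Bool) → Bool) (i : Fin n) : ℝ :=
  (1 / 2 ^ n : ℝ) * ∑ x : Fin n → Bool,
    if f x ≠ f (Function.update x i (!x i)) then 1 else 0

/-- Average sensitivity (total influence). -/
def avgSens {n : ℕ} (f : (Fin n → Bool) → Bool) : ℝ := ∑ i, influence f i

/-- `f` is a degree-`d` polynomial threshold function: `f = sign(P)` for some real
polynomial of total degree at most `d`, with the convention `sign 0 = 1`. -/
def IsPTF {n : ℕ} (d : ℕ) (f : (Fin n → Bool) → Bool) : Prop :=
  ∃ P : MvPolynomial (Fin n) ℝ, P.totalDegree ≤ d ∧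
    ∀ x, (f x = true ↔ 0 ≤ MvPolynomial.eval (fun i => pmOne (x i)) P)

/-- Evaluation of the multilinear polynomial with coefficients `a` at the point `x`. -/
def mlEval {n : ℕ} (a : Finset (Fin n) → ℝ) (x : Fin n → ℝ) : ℝ :=
  ∑ I : Finset (Fin n), a I * ∏ i ∈ I, x i

/-- The multilinear polynomial with coefficients `a` has degree at most `d`. -/
def DegLE {n : ℕ} (a : Finset (Fin n) → ℝ) (d : ℕ) : Prop :=
  ∀ I, a I ≠ 0 → I.card ≤ d

/-- Squared weight `w_i²` of coordinate `i`: `Σ_{I ∋ i} a_I²`. -/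
def wsq {n : ℕ} (a : Finset (Fin n) → ℝ) (i : Fin n) : ℝ :=
  ∑ I ∈ univ.filter (fun I : Finset (Fin n) => i ∈ I), a I ^ 2

/-- `ε`-regularity: `Σ_i w_i⁴ ≤ ε² (Σ_i w_i²)²`. -/
def Regular {n : ℕ} (a : Finset (Fin n) → ℝ) (ε : ℝ) : Prop :=
  ∑ i, wsq a i ^ 2 ≤ ε ^ 2 * (∑ i, wsq a i) ^ 2

/-- `σ_{k+1}²(P) = Σ_{j ≥ k (0-based)} w_j²` (tail weight, `k` restricted variables). -/
def sigmaSq {n : ℕ} (a : Finset (Fin n) → ℝ) (k : ℕ) : ℝ :=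
  ∑ j ∈ univ.filter (fun j : Fin n => k ≤ (j : ℕ)), wsq a j

/-- The variables are ordered by decreasing weight. -/
def OrderedWeights {n : ℕ} (a : Finset (Fin n) → ℝ) : Prop :=
  ∀ i j : Fin n, i ≤ j → wsq a j ≤ wsq a i

/-- The `ε`-critical index `K(P,ε)`: least `k` such that `w_j² ≤ ε² σ_{k+1}²` for all
`j` beyond the first `k` variables. -/
def critIndex {n : ℕ} (a : Finset (Fin n) → ℝ) (ε : ℝ) : ℕ :=
  sInf {k : ℕ | ∀ j : Fin n, k ≤ (j : ℕ) → wsq a j ≤ ε ^ 2 * sigmaSq a k}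

/-- Coefficients (in the variables `Y_j`, `j ≥ K`) of the restriction of the multilinear
polynomial `a` obtained by fixing the first `K` variables to `x`. -/
def restCoeff {n : ℕ} (a : Finset (Fin n) → ℝ) (K : ℕ) (x : Fin n → ℝ)
    (J : Finset (Fin n)) : ℝ :=
  if ∀ j ∈ J, K ≤ (j : ℕ) then
    ∑ I ∈ univ.filter (fun I : Finset (Fin n) => I.filter (fun i => K ≤ i.val) = J),
      a I * ∏ i ∈ I.filter (fun i => i.val < K), x i
  else 0

/-- Standard Gaussian measure on `ℝ^n`. -/
def gaussn (n : ℕ) : Measure (Fin n → ℝ) := Measure.pi fun _ => gaussianReal 0 1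

/-- Gaussian noise sensitivity: `Pr[f(X) ≠ f((1-δ)X + √(2δ-δ²)Y)]` for independent
standard Gaussian vectors `X, Y`. -/
def gns (n : ℕ) (δ : ℝ) (f : (Fin n → ℝ) → ℝ) : ℝ :=
  (((gaussn n).prod (gaussn n))
    {p | f p.1 ≠ f (fun i => (1 - δ) * p.1 i + Real.sqrt (2 * δ - δ ^ 2) * p.2 i)}).toReal

/-- Normalized probabilists' Hermite polynomial `H_k(x)`. -/
def normHermite (k : ℕ) (x : ℝ) : ℝ :=
  Polynomial.aeval x (Polynomial.hermite k) / Real.sqrt (Nat.factorial k)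


/-!
By Cauchy–Schwarz it suffices to bound `E[S²]` for `S = Σ_i X_i f_i(X)`. The diagonal terms
of `E[S²]` contribute `n`. For `i ≠ j` the factor `X_i f_i(X) X_j` changes sign when `X_i` is
flipped, so pairing `x` with `x^{(i)}` shows `|E[X_i f_i(X) X_j f_j(X)]| ≤ I_i(f_j)`. Hence
`E[S²] ≤ n + Σ_j AS(f_j)`.
-/

lemma pmOne_not (b : Bool) : pmOne (!b) = -pmOne b := by
  cases b <;> norm_num [pmOne]

lemma pmOne_mul_self (b : Bool) : pmOne b * pmOne b = 1 := by
  cases b <;> norm_num [pmOne]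

lemma abs_pmOne (b : Bool) : |pmOne b| = 1 := by
  cases b <;> norm_num [pmOne]

lemma abs_pmOne_sub_pmOne (a b : Bool) :
    |pmOne a - pmOne b| = 2 * (if a ≠ b then 1 else 0) := by
  cases a <;> cases b <;> norm_num [pmOne]

lemma influence_nonneg {n : ℕ} (f : (Fin n → Bool) → Bool) (i : Fin n) :
    0 ≤ influence f i :=
  mul_nonneg (by positivity) (sum_nonneg fun _ _ => by split_ifs <;> norm_num)

lemma avgSens_nonneg {n : ℕ} (f : (Fin n → Bool) → Bool) : 0 ≤ avgSens f :=
  sum_nonneg fun i _ => influence_nonneg f i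

lemma two_pow_mul_influence {n : ℕ} (f : (Fin n → Bool) → Bool) (i : Fin n) :
    2 ^ n * influence f i
      = ∑ x : Fin n → Bool, if f x ≠ f (Function.update x i (!x i)) then 1 else 0 := by
  rw [influence, ← mul_assoc, mul_one_div_cancel (by positivity), one_mul]

lemma sum_comp_update_not {n : ℕ} {M : Type*} [AddCommMonoid M] (i : Fin n)
    (φ : (Fin n → Bool) → M) :
    ∑ x, φ (Function.update x i (!x i)) = ∑ x, φ x := by
  have hflip : Function.Involutive fun x : Fin n → Bool => Function.update x i (!x i) := by
    intro x
    simp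
  exact Equiv.sum_comp (hflip.toPerm _) φ

lemma abs_sum_mul_pmOne_le_of_odd {n : ℕ} (u : (Fin n → Bool) → ℝ)
    (f : (Fin n → Bool) → Bool) (i : Fin n)
    (hodd : ∀ x, u (Function.update x i (!x i)) = -u x) (hu : ∀ x, |u x| ≤ 1) :
    |∑ x, u x * pmOne (f x)| ≤ 2 ^ n * influence f i := by
  have hpair : 2 * ∑ x, u x * pmOne (f x)
      = ∑ x, u x * (pmOne (f x) - pmOne (f (Function.update x i (!x i)))) := by
    conv_lhs => rw [two_mul]; enter [2]; rw [← sum_comp_update_not i]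
    simp only [hodd, mul_sub, sum_sub_distrib, neg_mul, sum_neg_distrib, ← sub_eq_add_neg]
  have hterm : ∀ x, |u x * (pmOne (f x) - pmOne (f (Function.update x i (!x i))))|
      ≤ 2 * if f x ≠ f (Function.update x i (!x i)) then 1 else 0 := by
    intro x
    rw [abs_mul, abs_pmOne_sub_pmOne]
    exact mul_le_of_le_one_left (by positivity) (hu x)
  have hdouble : 2 * |∑ x, u x * pmOne (f x)| ≤ 2 * (2 ^ n * influence f i) := by
    rw [← abs_two, ← abs_mul, hpair, abs_two, two_pow_mul_influence, mul_sum]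
    exact (abs_sum_le_sum_abs _ _).trans (sum_le_sum fun x _ => hterm x)
  linarith

lemma sum_pmOne_mul_pmOne_le {n : ℕ} (f : Fin n → ((Fin n → Bool) → Bool))
    (hind : ∀ (i : Fin n) (x : Fin n → Bool) (b : Bool),
      f i (Function.update x i b) = f i x) (i j : Fin n) :
    ∑ x : Fin n → Bool, (pmOne (x i) * pmOne (f i x)) * (pmOne (x j) * pmOne (f j x))
      ≤ 2 ^ n * ((if i = j then 1 else 0) + influence (f j) i) := by
  by_cases hij : i = j
  · subst hij
    have hone : ∀ x : Fin n → Bool,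
        (pmOne (x i) * pmOne (f i x)) * (pmOne (x i) * pmOne (f i x)) = 1 := fun x => by
      rw [mul_mul_mul_comm, pmOne_mul_self, pmOne_mul_self, one_mul]
    simp only [hone, sum_const, card_univ, Fintype.card_pi, Fintype.card_bool, prod_const,
      Fintype.card_fin, nsmul_eq_mul, mul_one, if_true]
    push_cast
    exact le_mul_of_one_le_right (by positivity) (by linarith [influence_nonneg (f i) i])
  · have hodd : ∀ x : Fin n → Bool,
        pmOne (Function.update x i (!x i) i) * pmOne (f i (Function.update x i (!x i)))
            * pmOne (Function.update x i (!x i) j)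
          = -(pmOne (x i) * pmOne (f i x) * pmOne (x j)) := fun x => by
      rw [Function.update_self, Function.update_of_ne (Ne.symm hij), hind, pmOne_not]
      ring
    have hu : ∀ x : Fin n → Bool, |pmOne (x i) * pmOne (f i x) * pmOne (x j)| ≤ 1 := fun x => by
      simp only [abs_mul, abs_pmOne, mul_one, le_refl]
    calc ∑ x : Fin n → Bool, (pmOne (x i) * pmOne (f i x)) * (pmOne (x j) * pmOne (f j x))
        = ∑ x : Fin n → Bool, pmOne (x i) * pmOne (f i x) * pmOne (x j) * pmOne (f j x) := by
          simp only [mul_assoc]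
      _ ≤ 2 ^ n * influence (f j) i :=
          (le_abs_self _).trans (abs_sum_mul_pmOne_le_of_odd _ (f j) i hodd hu)
      _ = 2 ^ n * ((if i = j then 1 else 0) + influence (f j) i) := by
          rw [if_neg hij, zero_add]

lemma sum_sq_sum_pmOne_mul_pmOne_le {n : ℕ} (f : Fin n → ((Fin n → Bool) → Bool))
    (hind : ∀ (i : Fin n) (x : Fin n → Bool) (b : Bool),
      f i (Function.update x i b) = f i x) :
    ∑ x : Fin n → Bool, (∑ i, pmOne (x i) * pmOne (f i x)) ^ 2
      ≤ 2 ^ n * (n + ∑ i, avgSens (f i)) := by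
  calc ∑ x : Fin n → Bool, (∑ i, pmOne (x i) * pmOne (f i x)) ^ 2
      = ∑ i, ∑ j, ∑ x : Fin n → Bool,
          (pmOne (x i) * pmOne (f i x)) * (pmOne (x j) * pmOne (f j x)) := by
        simp_rw [sq, sum_mul_sum]
        rw [sum_comm]
        exact sum_congr rfl fun i _ => sum_comm
    _ ≤ ∑ i, ∑ j, 2 ^ n * ((if i = j then 1 else 0) + influence (f j) i) :=
        sum_le_sum fun i _ => sum_le_sum fun j _ => sum_pmOne_mul_pmOne_le f hind i j
    _ = 2 ^ n * (n + ∑ i, avgSens (f i)) := by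
        simp only [← mul_sum, sum_add_distrib, sum_ite_eq, mem_univ, if_true, sum_const,
          card_univ, Fintype.card_fin, nsmul_eq_mul, mul_one, avgSens]
        rw [sum_comm]

/-- Lemma 1.6: if each Boolean function `f_i` does not depend on its
`i`-th coordinate, then `(E|Σ_i X_i f_i(X_{-i})|)² ≤ 2 Σ_i AS(f_i) + n`. -/
theorem expectation_abs_sum_sq_le (n : ℕ) (f : Fin n → ((Fin n → Bool) → Bool))
    (hind : ∀ (i : Fin n) (x : Fin n → Bool) (b : Bool),
      f i (Function.update x i b) = f i x) :
    ((1 / 2 ^ n : ℝ) * ∑ x : Fin n → Bool, |∑ i, pmOne (x i) * pmOne (f i x)|) ^ 2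
      ≤ 2 * (∑ i, avgSens (f i)) + n := by
  have hcard : ((univ : Finset (Fin n → Bool)).card : ℝ) = 2 ^ n := by simp
  calc ((1 / 2 ^ n : ℝ) * ∑ x : Fin n → Bool, |∑ i, pmOne (x i) * pmOne (f i x)|) ^ 2
      = ((∑ x : Fin n → Bool, |∑ i, pmOne (x i) * pmOne (f i x)|) / #univ) ^ 2 := by
        rw [hcard, one_div_mul_eq_div]
    _ ≤ (∑ x : Fin n → Bool, |∑ i, pmOne (x i) * pmOne (f i x)| ^ 2) / #univ :=
        sum_div_card_sq_le_sum_sq_div_card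
    _ ≤ n + ∑ i, avgSens (f i) := by
        rw [hcard, div_le_iff₀' (by positivity)]
        simpa only [sq_abs] using sum_sq_sum_pmOne_mul_pmOne_le f hind
    _ ≤ 2 * (∑ i, avgSens (f i)) + n := by
        linarith [sum_nonneg fun i (_ : i ∈ univ) => avgSens_nonneg (f i)]

end
end

section
/- For every integer d ≥ 1 there exist constants b_d, c_d ∈ R and δ_d > 0 such that the following holds for every ε ∈ (0,1) and every multilinear polynomial P of degree at most d on n variables whose variables are ordered so that w_1(P) ≥ … ≥ w_n(P), every θ ∈ R, and f(x) = sign(P(x) − θ). If the ε-critical index satisfies K(P,ε) ≥ L where L = c_d · log(1/ε)/ε², then a uniformly random partial assignment (x_1,…,x_L) ∈ {-1,1}^L is (b_d · ε)-determining for f with probability at least δ_d. -/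
open Finset MeasureTheory ProbabilityTheory
open scoped Classical

noncomputable section

/-!
Fix the first `L` variables to `x` and write `P(x, y) - θ = u(x) + T_x(y)`, where
`u(x) = a_∅ - θ + Z(x)` with `Z = headPoly a L` collects the monomials in the fixed variables,
and `T_x` has mean zero and variance `restVar a L x` in `y`. Before the critical index every
variable carries at least an `ε²`-fraction of the remaining weight, so the monomials meeting the
free variables have total squared weight at most
`sigmaSq a L ≤ (1 - ε²)^L sigmaSq a 0 ≤ ε^(d+1) sigmaSq a 0`, at most `2dε` times the
variance `V` of `Z`. Bonami's inequality `E Z⁴ ≤ 9^d V²` gives anticoncentration: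
`|u(x)| ≥ √V / (4·3^d)` with probability at least `1 / (16·9^d)`. By Markov, `E_y T_x²` exceeds
`32·9^d` times its mean with probability at most `1 / (32·9^d)`, and for the remaining `x`
Chebyshev bounds the probability that `T_x(y)` flips the sign of `u(x)` by `O_d(ε)`.
-/

namespace RandomRestriction

section Fourier

variable {ι : Type*}

lemma pmOne_mul_self (b : Bool) : pmOne b * pmOne b = 1 := by cases b <;> simp [pmOne]

lemma pmOne_not (b : Bool) : pmOne (!b) = -pmOne b := by cases b <;> simp [pmOne]

def chi (I : Finset ι) (x : ι → Bool) : ℝ := ∏ i ∈ I, pmOne (x i)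

@[simp] lemma chi_empty (x : ι → Bool) : chi ∅ x = 1 := prod_empty

variable [DecidableEq ι]

lemma chi_update_of_notMem {I : Finset ι} {i : ι} (hi : i ∉ I) (x : ι → Bool) (b : Bool) :
    chi I (Function.update x i b) = chi I x :=
  prod_congr rfl fun j hj => by rw [Function.update_of_ne (ne_of_mem_of_not_mem hj hi)]

lemma chi_mul_chi (I J : Finset ι) (x : ι → Bool) :
    chi I x * chi J x = chi (symmDiff I J) x := by
  have hsq : chi (I ∩ J) x * chi (I ∩ J) x = 1 := by
    rw [chi, ← prod_mul_distrib]
    exact prod_eq_one fun i _ => pmOne_mul_self _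
  calc chi I x * chi J x = chi (I ∪ J) x * chi (I ∩ J) x := prod_union_inter.symm
    _ = chi ((I ∪ J) \ (I ∩ J)) x * (chi (I ∩ J) x * chi (I ∩ J) x) := by
      simp only [chi]
      rw [← mul_assoc, prod_sdiff inter_subset_union]
    _ = chi (symmDiff I J) x := by rw [hsq, mul_one, symmDiff_eq_sup_sdiff_inf]; rfl

variable [Fintype ι]

lemma sum_pmOne_mul_eq_zero (i : ι) (g : (ι → Bool) → ℝ)
    (hg : ∀ x b, g (Function.update x i b) = g x) :
    ∑ x : ι → Bool, pmOne (x i) * g x = 0 := by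
  have hflip : Function.Involutive fun x : ι → Bool => Function.update x i (!x i) := fun x => by
    simp
  have h := Equiv.sum_comp hflip.toPerm fun x => pmOne (x i) * g x
  simp only [Function.Involutive.coe_toPerm, Function.update_self, pmOne_not, hg, neg_mul,
    sum_neg_distrib] at h
  linarith

lemma sum_chi (I : Finset ι) :
    ∑ x : ι → Bool, chi I x = if I = ∅ then (2 : ℝ) ^ Fintype.card ι else 0 := by
  split_ifs with hI
  · simp [hI]
  · obtain ⟨i, hi⟩ := nonempty_iff_ne_empty.mpr hI
    simp_rw [chi, ← mul_prod_erase I _ hi]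
    exact sum_pmOne_mul_eq_zero i _ fun x b =>
      chi_update_of_notMem (notMem_erase i I) x b

lemma sum_chi_mul_chi (I J : Finset ι) :
    ∑ x : ι → Bool, chi I x * chi J x = if I = J then (2 : ℝ) ^ Fintype.card ι else 0 := by
  simp_rw [chi_mul_chi, sum_chi, ← bot_eq_empty, symmDiff_eq_bot]

lemma sum_sq_sum_mul_chi {κ : Type*} (s : Finset κ) (b : κ → ℝ) (φ : κ → Finset ι)
    (hφ : Set.InjOn φ s) :
    ∑ x : ι → Bool, (∑ k ∈ s, b k * chi (φ k) x) ^ 2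
      = 2 ^ Fintype.card ι * ∑ k ∈ s, b k ^ 2 := by
  calc ∑ x : ι → Bool, (∑ k ∈ s, b k * chi (φ k) x) ^ 2
      = ∑ k ∈ s, ∑ l ∈ s, b k * b l * ∑ x : ι → Bool, chi (φ k) x * chi (φ l) x := by
        simp_rw [sq, sum_mul_sum, mul_sum]
        rw [sum_comm]
        refine sum_congr rfl fun k _ => ?_
        rw [sum_comm]
        exact sum_congr rfl fun l _ => sum_congr rfl fun x _ => by ring
    _ = ∑ k ∈ s, 2 ^ Fintype.card ι * b k ^ 2 := by
        refine sum_congr rfl fun k hk => ?_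
        rw [sum_eq_single_of_mem k hk fun l hl hlk => by
          rw [sum_chi_mul_chi, if_neg fun h => hlk (hφ hk hl h).symm, mul_zero]]
        rw [sum_chi_mul_chi, if_pos rfl]
        ring
    _ = 2 ^ Fintype.card ι * ∑ k ∈ s, b k ^ 2 := (mul_sum ..).symm

lemma sum_sum_mul_chi_eq_zero {κ : Type*} (s : Finset κ) (b : κ → ℝ) (φ : κ → Finset ι)
    (hφ : ∀ k ∈ s, φ k ≠ ∅) :
    ∑ x : ι → Bool, ∑ k ∈ s, b k * chi (φ k) x = 0 := by
  rw [sum_comm]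
  exact sum_eq_zero fun k hk => by rw [← mul_sum, sum_chi, if_neg (hφ k hk), mul_zero]

end Fourier

section Bonami

variable {ι : Type*} [Fintype ι] [DecidableEq ι]

lemma sum_pow_four_add_pmOne_mul (i : ι) (Q₀ Q₁ : (ι → Bool) → ℝ)
    (h₀ : ∀ x b, Q₀ (Function.update x i b) = Q₀ x)
    (h₁ : ∀ x b, Q₁ (Function.update x i b) = Q₁ x) :
    ∑ x : ι → Bool, (Q₀ x + pmOne (x i) * Q₁ x) ^ 4
      = ∑ x : ι → Bool, Q₀ x ^ 4 + 6 * ∑ x : ι → Bool, Q₀ x ^ 2 * Q₁ x ^ 2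
        + ∑ x : ι → Bool, Q₁ x ^ 4 := by
  have hexpand : ∀ x : ι → Bool, (Q₀ x + pmOne (x i) * Q₁ x) ^ 4
      = Q₀ x ^ 4 + 6 * (Q₀ x ^ 2 * Q₁ x ^ 2) + Q₁ x ^ 4
        + pmOne (x i) * (4 * Q₀ x ^ 3 * Q₁ x + 4 * Q₀ x * Q₁ x ^ 3) := fun x => by
    linear_combination (Q₁ x ^ 4 * (pmOne (x i) ^ 2 + 1) + 4 * Q₀ x * Q₁ x ^ 3 * pmOne (x i)
      + 6 * Q₀ x ^ 2 * Q₁ x ^ 2) * (pmOne_mul_self (x i))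
  have hodd := sum_pmOne_mul_eq_zero i (fun x => 4 * Q₀ x ^ 3 * Q₁ x + 4 * Q₀ x * Q₁ x ^ 3)
    fun x b => by simp only [h₀, h₁]
  simp only [hexpand, sum_add_distrib, hodd, add_zero, mul_sum]

lemma add_six_mul_add_le {A B M X Y C : ℝ} (hB0 : 0 ≤ B) (hC : 0 ≤ C)
    (hX : 0 ≤ X) (hY : 0 ≤ Y) (hA : A ≤ 9 * C * X ^ 2) (hB : B ≤ C * Y ^ 2)
    (hM : M ^ 2 ≤ A * B) : A + 6 * M + B ≤ 9 * C * (X + Y) ^ 2 := by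
  have hAB : M ^ 2 ≤ (3 * C * X * Y) ^ 2 :=
    hM.trans (by nlinarith [mul_le_mul hA hB hB0 (by positivity)])
  have hM' : M ≤ 3 * C * X * Y := (abs_le_of_sq_le_sq' hAB (by positivity)).2
  nlinarith [mul_nonneg hC (sq_nonneg Y)]

lemma sum_pow_four_le_of_const (s : Finset ι) (c : Finset ι → ℝ)
    (hc : ∀ I ⊆ s, c I ≠ 0 → I = ∅) (d : ℕ) :
    ∑ x : ι → Bool, (∑ I ∈ s.powerset, c I * chi I x) ^ 4
      ≤ 2 ^ Fintype.card ι * 9 ^ d * (∑ I ∈ s.powerset, c I ^ 2) ^ 2 := by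
  have hzero : ∀ I ∈ s.powerset, I ≠ ∅ → c I = 0 := fun I hI hne => by
    by_contra h; exact hne (hc I (mem_powerset.mp hI) h)
  have hempty : ∅ ∈ s.powerset := empty_mem_powerset s
  have hsum : ∀ x, ∑ I ∈ s.powerset, c I * chi I x = c ∅ := fun x => by
    rw [sum_eq_single_of_mem ∅ hempty fun I hI hne => by rw [hzero I hI hne, zero_mul],
      chi_empty, mul_one]
  have hsq : ∑ I ∈ s.powerset, c I ^ 2 = c ∅ ^ 2 :=
    sum_eq_single_of_mem ∅ hempty fun I hI hne => by rw [hzero I hI hne]; ring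
  simp only [hsum, hsq, sum_const, card_univ, Fintype.card_fun, Fintype.card_bool, nsmul_eq_mul]
  have h9 : (1 : ℝ) ≤ 9 ^ d := one_le_pow₀ (by norm_num)
  push_cast
  calc (2 : ℝ) ^ Fintype.card ι * c ∅ ^ 4
      = 2 ^ Fintype.card ι * 1 * (c ∅ ^ 2) ^ 2 := by ring
    _ ≤ 2 ^ Fintype.card ι * 9 ^ d * (c ∅ ^ 2) ^ 2 := by gcongr

/-- Bonami's inequality, by induction on the variables: for `f = f₀ + x_i f₁` with
`deg f₁ < d` the odd terms of `E f⁴` vanish and Cauchy–Schwarz bounds `E f₀² f₁²`. -/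
theorem sum_pow_four_le (s : Finset ι) :
    ∀ (d : ℕ) (c : Finset ι → ℝ), (∀ I ⊆ s, c I ≠ 0 → I.card ≤ d) →
      ∑ x : ι → Bool, (∑ I ∈ s.powerset, c I * chi I x) ^ 4
        ≤ 2 ^ Fintype.card ι * 9 ^ d * (∑ I ∈ s.powerset, c I ^ 2) ^ 2 := by
  induction s using Finset.induction_on with
  | empty =>
    exact fun d c _ => sum_pow_four_le_of_const ∅ c (fun I hI _ => subset_empty.mp hI) d
  | @insert i s hi ih =>
    rintro (_ | d) c hc
    · exact sum_pow_four_le_of_const _ c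
        (fun I hI h => card_eq_zero.mp (Nat.le_zero.mp (hc I hI h))) 0
    set Q₀ := fun x => ∑ I ∈ s.powerset, c I * chi I x
    set Q₁ := fun x => ∑ I ∈ s.powerset, c (insert i I) * chi I x
    have hnotMem : ∀ I ∈ s.powerset, i ∉ I := fun I hI hiI => hi (mem_powerset.mp hI hiI)
    have hdecomp : ∀ x, ∑ I ∈ (insert i s).powerset, c I * chi I x
        = Q₀ x + pmOne (x i) * Q₁ x := fun x => by
        rw [sum_powerset_insert hi, mul_sum]
        congr 1
        refine sum_congr rfl fun I hI => ?_
        rw [chi, prod_insert (hnotMem I hI), ← chi]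
        ring
    have hinv : ∀ (e : Finset ι → ℝ) x b,
        ∑ I ∈ s.powerset, e I * chi I (Function.update x i b)
          = ∑ I ∈ s.powerset, e I * chi I x := fun e x b =>
      sum_congr rfl fun I hI => by rw [chi_update_of_notMem (hnotMem I hI)]
    have h₀ := ih (d + 1) c fun I hI => hc I (hI.trans (subset_insert i s))
    have h₁ := ih d (fun I => c (insert i I)) fun I hI h => by
      have := hc _ (insert_subset_insert i hI) h
      rw [card_insert_of_notMem (fun hiI => hi (hI hiI))] at this
      omega
    have hA : ∑ x, Q₀ x ^ 4
        ≤ 9 * (2 ^ Fintype.card ι * 9 ^ d) * (∑ I ∈ s.powerset, c I ^ 2) ^ 2 :=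
      h₀.trans_eq (by ring)
    have hcs :
        (∑ x, Q₀ x ^ 2 * Q₁ x ^ 2) ^ 2 ≤ (∑ x, Q₀ x ^ 4) * ∑ x, Q₁ x ^ 4 := by
      have h := sum_mul_sq_le_sq_mul_sq univ (fun x => Q₀ x ^ 2) (fun x => Q₁ x ^ 2)
      simp only [← pow_mul] at h
      exact h
    simp_rw [hdecomp, sum_powerset_insert hi,
      sum_pow_four_add_pmOne_mul i Q₀ Q₁ (hinv c) (hinv _)]
    refine (add_six_mul_add_le (sum_nonneg fun x _ => by positivity) (by positivity)
      (sum_nonneg fun _ _ => sq_nonneg _) (sum_nonneg fun _ _ => sq_nonneg _) hA h₁ hcs).trans_eq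
      (by ring)

end Bonami

section Anticoncentration

variable {α : Type*} [Fintype α]

/-- Cauchy–Schwarz twice, through `∑ |Z|³`. -/
lemma sum_sq_pow_three_le (Z : α → ℝ) :
    (∑ x, Z x ^ 2) ^ 3 ≤ (∑ x, |Z x|) ^ 2 * ∑ x, Z x ^ 4 := by
  have h13 : (∑ x, Z x ^ 2) ^ 2 ≤ (∑ x, |Z x|) * ∑ x, |Z x| ^ 3 :=
    sum_sq_le_sum_mul_sum_of_sq_le_mul univ (fun x _ => abs_nonneg (Z x))
      (fun x _ => by positivity) fun x _ => le_of_eq (by rw [← sq_abs (Z x)]; ring)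
  have h24 : (∑ x, |Z x| ^ 3) ^ 2 ≤ (∑ x, Z x ^ 2) * ∑ x, Z x ^ 4 :=
    sum_sq_le_sum_mul_sum_of_sq_le_mul univ (fun x _ => sq_nonneg (Z x))
      (fun x _ => by positivity) fun x _ =>
      le_of_eq (by rw [show Z x ^ 4 = (Z x ^ 2) ^ 2 by ring, ← sq_abs (Z x)]; ring)
  have hS2 : 0 ≤ ∑ x, Z x ^ 2 := sum_nonneg fun x _ => sq_nonneg _
  have hA1 : 0 ≤ ∑ x, |Z x| := sum_nonneg fun x _ => abs_nonneg _
  rcases hS2.eq_or_lt with h | h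
  · rw [← h, zero_pow three_ne_zero]; positivity
  · refine le_of_mul_le_mul_left ?_ h
    calc (∑ x, Z x ^ 2) * (∑ x, Z x ^ 2) ^ 3 = ((∑ x, Z x ^ 2) ^ 2) ^ 2 := by ring
      _ ≤ ((∑ x, |Z x|) * ∑ x, |Z x| ^ 3) ^ 2 := pow_le_pow_left₀ (by positivity) h13 2
      _ = (∑ x, |Z x|) ^ 2 * (∑ x, |Z x| ^ 3) ^ 2 := by ring
      _ ≤ (∑ x, |Z x|) ^ 2 * ((∑ x, Z x ^ 2) * ∑ x, Z x ^ 4) := by gcongr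
      _ = _ := by ring

lemma card_mul_le_mul_sum_abs (Z : α → ℝ) {W q : ℝ} (hW : 0 < W) (hq : 0 ≤ q)
    (h2 : ∑ x, Z x ^ 2 = Fintype.card α * W ^ 2)
    (h4 : ∑ x, Z x ^ 4 ≤ q ^ 2 * Fintype.card α * W ^ 4) :
    Fintype.card α * W ≤ q * ∑ x, |Z x| := by
  set N : ℝ := (Fintype.card α : ℝ)
  have hA1 : 0 ≤ q * ∑ x, |Z x| := mul_nonneg hq (sum_nonneg fun x _ => abs_nonneg _)
  have hN : 0 ≤ N := Nat.cast_nonneg _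
  rcases hN.eq_or_lt with hN0 | hNpos
  · rwa [← hN0, zero_mul]
  have h : (N * W ^ 2) ^ 3 ≤ (q * ∑ x, |Z x|) ^ 2 * (N * W ^ 4) := by
    calc (N * W ^ 2) ^ 3 ≤ (∑ x, |Z x|) ^ 2 * ∑ x, Z x ^ 4 := h2 ▸ sum_sq_pow_three_le Z
      _ ≤ (∑ x, |Z x|) ^ 2 * (q ^ 2 * N * W ^ 4) := by gcongr
      _ = (q * ∑ x, |Z x|) ^ 2 * (N * W ^ 4) := by ring
  have hsq : (N * W) ^ 2 ≤ (q * ∑ x, |Z x|) ^ 2 :=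
    le_of_mul_le_mul_right (by linarith) (mul_pos hNpos (pow_pos hW 4))
  exact (abs_le_of_sq_le_sq' hsq hA1).2

/-- Since `Z` is centred, `∑ Z⁺ = ∑ |Z| / 2`, which the fourth-moment bound makes large; by
Cauchy–Schwarz the part of `∑ Z⁺` above `W / (4q)` then needs many points. -/
theorem card_le_card_filter_le (Z : α → ℝ) {W q : ℝ} (hW : 0 < W) (hq : 0 < q)
    (h0 : ∑ x, Z x = 0) (h2 : ∑ x, Z x ^ 2 = Fintype.card α * W ^ 2)
    (h4 : ∑ x, Z x ^ 4 ≤ q ^ 2 * Fintype.card α * W ^ 4) :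
    (Fintype.card α : ℝ) ≤ 16 * q ^ 2 * #{x | W / (4 * q) ≤ Z x} := by
  set N : ℝ := (Fintype.card α : ℝ)
  set t := W / (4 * q) with ht_def
  set F := univ.filter fun x => t ≤ Z x
  have hN : 0 ≤ N := Nat.cast_nonneg _
  have ht : 0 ≤ t := by positivity
  have hA1 := card_mul_le_mul_sum_abs Z hW hq.le h2 h4
  have hpos : 2 * ∑ x, (Z x)⁺ = ∑ x, |Z x| := by
    rw [mul_sum, ← add_zero (∑ x, |Z x|), ← h0, ← sum_add_distrib]
    exact sum_congr rfl fun x _ => by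
      linear_combination posPart_add_negPart (Z x) + posPart_sub_negPart (Z x)
  have htrunc : ∑ x, (Z x)⁺ ≤ N * t + ∑ x ∈ F, Z x := by
    calc ∑ x, (Z x)⁺ ≤ ∑ x, (t + if t ≤ Z x then Z x else 0) := sum_le_sum fun x _ => by
          rw [posPart_def]
          split_ifs with h
          · exact max_le (by linarith) (by linarith)
          · exact max_le (by linarith) (by simpa using ht)
      _ = N * t + ∑ x ∈ F, Z x := by
          rw [sum_add_distrib, sum_const, card_univ, nsmul_eq_mul, sum_filter]
  have hcs : (∑ x ∈ F, Z x) ^ 2 ≤ #F * (N * W ^ 2) := by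
    rw [← h2]
    exact sq_sum_le_card_mul_sum_sq.trans (by gcongr; exact subset_univ F)
  have hqt : 4 * q * t = W := by rw [ht_def]; field_simp
  have hF : N * W ≤ 4 * q * ∑ x ∈ F, Z x := by nlinarith
  have hsq : N * (N * W ^ 2) ≤ 16 * q ^ 2 * #F * (N * W ^ 2) := by
    calc N * (N * W ^ 2) = (N * W) ^ 2 := by ring
      _ ≤ (4 * q * ∑ x ∈ F, Z x) ^ 2 := pow_le_pow_left₀ (mul_nonneg hN hW.le) hF 2
      _ = 16 * q ^ 2 * (∑ x ∈ F, Z x) ^ 2 := by ring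
      _ ≤ 16 * q ^ 2 * (#F * (N * W ^ 2)) := by gcongr
      _ = 16 * q ^ 2 * #F * (N * W ^ 2) := by ring
  rcases hN.eq_or_lt with hN0 | hNpos
  · rw [← hN0]; positivity
  · exact le_of_mul_le_mul_right hsq (mul_pos hNpos (pow_pos hW 2))

theorem card_le_card_filter_le_abs_add (Z : α → ℝ) {W q : ℝ} (hW : 0 < W) (hq : 0 < q)
    (h0 : ∑ x, Z x = 0) (h2 : ∑ x, Z x ^ 2 = Fintype.card α * W ^ 2)
    (h4 : ∑ x, Z x ^ 4 ≤ q ^ 2 * Fintype.card α * W ^ 4) (c : ℝ) :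
    (Fintype.card α : ℝ) ≤ 16 * q ^ 2 * #{x | W / (4 * q) ≤ |c + Z x|} := by
  rcases le_total 0 c with hc | hc
  · refine (card_le_card_filter_le Z hW hq h0 h2 h4).trans ?_
    gcongr with x
    linarith [le_abs_self (c + Z x)]
  · have hneg := card_le_card_filter_le (fun x => -Z x) hW hq
      (by rw [sum_neg_distrib, h0, neg_zero]) (by simpa only [neg_sq] using h2)
      (by simpa only [Even.neg_pow (by decide : Even 4)] using h4)
    refine hneg.trans ?_
    gcongr with x
    linarith [neg_abs_le (c + Z x)]

end Anticoncentration

section Counting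

variable {β : Type*} [Fintype β]

lemma abs_le_abs_of_sign_ne {u T : ℝ} (h : ¬(0 ≤ u + T ↔ 0 ≤ u)) : |u| ≤ |T| := by
  by_cases hu : 0 ≤ u
  · have hneg : u + T < 0 := not_le.mp fun h' => h (iff_of_true h' hu)
    rw [abs_of_nonneg hu]
    linarith [neg_le_abs T]
  · have hpos : 0 ≤ u + T := by_contra fun h' => h (iff_of_false h' hu)
    rw [abs_of_neg (not_le.mp hu)]
    linarith [le_abs_self T]

lemma card_filter_sign_ne_le (T : β → ℝ) {u t m : ℝ} (ht : 0 ≤ t) (hu : t ≤ |u|)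
    (hm : 0 ≤ m) (hT : ∑ y, T y ^ 2 ≤ m * t ^ 2) :
    (#{y | ¬(0 ≤ u + T y ↔ 0 ≤ u)} : ℝ) ≤ m := by
  rcases ht.eq_or_lt with rfl | htpos
  · have hT0 : ∀ y, T y = 0 := fun y => by
      have h := (sum_eq_zero_iff_of_nonneg fun y _ => sq_nonneg (T y)).mp
        (le_antisymm (by simpa using hT) (sum_nonneg fun _ _ => sq_nonneg _)) y (mem_univ y)
      exact pow_eq_zero_iff two_ne_zero |>.mp h
    simpa [hT0] using hm
  · refine le_of_mul_le_mul_right ?_ (pow_pos htpos 2)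
    set F := univ.filter fun y => ¬(0 ≤ u + T y ↔ 0 ≤ u)
    calc (#F : ℝ) * t ^ 2 = ∑ y ∈ F, t ^ 2 := by rw [sum_const, nsmul_eq_mul]
      _ ≤ ∑ y ∈ F, T y ^ 2 := sum_le_sum fun y hy => by
          rw [← sq_abs (T y)]
          exact pow_le_pow_left₀ ht (hu.trans (abs_le_abs_of_sign_ne (mem_filter.mp hy).2)) 2
      _ ≤ ∑ y, T y ^ 2 :=
          sum_le_sum_of_subset_of_nonneg (subset_univ _) fun _ _ _ => sq_nonneg _
      _ ≤ m * t ^ 2 := hT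

lemma card_filter_lt_mul_le (S : β → ℝ) (hS : ∀ y, 0 ≤ S y) {c m : ℝ} (hm : 0 ≤ m)
    (hsum : ∑ y, S y ≤ Fintype.card β * m) :
    (#{y | c * m < S y} : ℝ) * c ≤ Fintype.card β := by
  rcases (univ.filter fun y => c * m < S y).eq_empty_or_nonempty with hB | hB
  · rw [hB, card_empty, Nat.cast_zero, zero_mul]
    exact Nat.cast_nonneg _
  refine (lt_of_mul_lt_mul_right ?_ hm).le
  calc (#{y | c * m < S y} : ℝ) * c * m = ∑ y ∈ {y | c * m < S y}, c * m := by
        rw [sum_const, nsmul_eq_mul, mul_assoc]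
    _ < ∑ y ∈ {y | c * m < S y}, S y :=
        sum_lt_sum_of_nonempty hB fun y hy => (mem_filter.mp hy).2
    _ ≤ ∑ y, S y := sum_le_sum_of_subset_of_nonneg (subset_univ _) fun y _ _ => hS y
    _ ≤ Fintype.card β * m := hsum

end Counting

section Restriction

variable {n : ℕ}

def headPart (L : ℕ) (I : Finset (Fin n)) : Finset (Fin n) := I.filter fun i => i.val < L

def tailPart (L : ℕ) (I : Finset (Fin n)) : Finset (Fin n) := I.filter fun i => L ≤ i.val

def headSupport (L : ℕ) : Finset (Finset (Fin n)) :=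
  univ.filter fun I => I ≠ ∅ ∧ tailPart L I = ∅

def tailSupport (L : ℕ) : Finset (Finset (Fin n)) := univ.filter fun I => tailPart L I ≠ ∅

def headMass (a : Finset (Fin n) → ℝ) (L : ℕ) : ℝ := ∑ I ∈ headSupport L, a I ^ 2

def tailMass (a : Finset (Fin n) → ℝ) (L : ℕ) : ℝ := ∑ I ∈ tailSupport L, a I ^ 2

def headPoly (a : Finset (Fin n) → ℝ) (L : ℕ) (x : Fin n → Bool) : ℝ :=
  ∑ I ∈ headSupport L, a I * chi I x

def restVar (a : Finset (Fin n) → ℝ) (L : ℕ) (x : Fin n → Bool) : ℝ :=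
  ∑ J ∈ univ.erase ∅, restCoeff a L (fun i => pmOne (x i)) J ^ 2

lemma mem_headSupport {L : ℕ} {I : Finset (Fin n)} :
    I ∈ headSupport L ↔ I ≠ ∅ ∧ tailPart L I = ∅ := by
  simp [headSupport]

lemma headPart_union_tailPart (L : ℕ) (I : Finset (Fin n)) :
    headPart L I ∪ tailPart L I = I := by
  rw [headPart, tailPart, ← filter_or]
  exact filter_true_of_mem fun i _ => lt_or_ge _ _

lemma headMass_nonneg (a : Finset (Fin n) → ℝ) (L : ℕ) : 0 ≤ headMass a L :=
  sum_nonneg fun _ _ => sq_nonneg _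

lemma tailMass_nonneg (a : Finset (Fin n) → ℝ) (L : ℕ) : 0 ≤ tailMass a L :=
  sum_nonneg fun _ _ => sq_nonneg _

lemma filter_tailPart_eq_empty (L : ℕ) :
    univ.filter (fun I : Finset (Fin n) => tailPart L I = ∅) = insert ∅ (headSupport L) := by
  ext I
  by_cases hI : I = ∅ <;> simp [headSupport, hI, tailPart]

lemma sum_sq_eq_add_headMass_add_tailMass (a : Finset (Fin n) → ℝ) (L : ℕ) :
    ∑ I, a I ^ 2 = a ∅ ^ 2 + headMass a L + tailMass a L := by
  rw [← sum_filter_add_sum_filter_not univ fun I => tailPart L I = ∅, filter_tailPart_eq_empty,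
    sum_insert (by simp [headSupport])]
  rfl

lemma sigmaSq_eq_sum_card_tailPart (a : Finset (Fin n) → ℝ) (k : ℕ) :
    sigmaSq a k = ∑ I, (tailPart k I).card * a I ^ 2 := by
  simp only [sigmaSq, wsq, card_eq_sum_ones, Nat.cast_sum, Nat.cast_one, sum_mul, one_mul]
  exact sum_comm' fun j I => by simp [tailPart, and_comm]

lemma tailMass_le_sigmaSq (a : Finset (Fin n) → ℝ) (L : ℕ) :
    tailMass a L ≤ sigmaSq a L := by
  rw [sigmaSq_eq_sum_card_tailPart, tailMass, tailSupport, sum_filter]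
  refine sum_le_sum fun I _ => ?_
  split_ifs with h
  · have : (1 : ℝ) ≤ (tailPart L I).card := by
      exact_mod_cast card_pos.mpr (nonempty_iff_ne_empty.mpr h)
    nlinarith [sq_nonneg (a I)]
  · positivity

lemma sigmaSq_zero_le {d : ℕ} {a : Finset (Fin n) → ℝ} (hdeg : DegLE a d) (L : ℕ) :
    sigmaSq a 0 ≤ d * (headMass a L + tailMass a L) := by
  have htail0 : ∀ I : Finset (Fin n), tailPart 0 I = I := fun I =>
    filter_true_of_mem fun _ _ => Nat.zero_le _
  have hle : ∀ I ∈ univ.erase ∅, (I.card : ℝ) * a I ^ 2 ≤ d * a I ^ 2 := fun I _ => by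
    by_cases h : a I = 0
    · simp [h]
    · gcongr
      exact_mod_cast hdeg I h
  calc sigmaSq a 0 = ∑ I ∈ univ.erase ∅, (I.card : ℝ) * a I ^ 2 := by
        rw [sigmaSq_eq_sum_card_tailPart, sum_erase _ (by simp)]
        simp only [htail0]
    _ ≤ ∑ I ∈ univ.erase ∅, d * a I ^ 2 := sum_le_sum hle
    _ = d * (headMass a L + tailMass a L) := by
        rw [← mul_sum, sum_erase_eq_sub (mem_univ _), sum_sq_eq_add_headMass_add_tailMass]
        ring

lemma restCoeff_eq_sum (a : Finset (Fin n) → ℝ) (L : ℕ) (x : Fin n → ℝ)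
    (J : Finset (Fin n)) :
    restCoeff a L x J
      = ∑ I ∈ univ.filter (fun I => tailPart L I = J), a I * ∏ i ∈ headPart L I, x i := by
  rw [restCoeff]
  split_ifs with hJ
  · rfl
  refine (sum_eq_zero fun I hI => ?_).symm
  rw [mem_filter] at hI
  exact absurd (fun j hj => by rw [← hI.2] at hj; exact (mem_filter.mp hj).2) hJ

lemma mlEval_eq_sum_restCoeff_mul_chi (a : Finset (Fin n) → ℝ) (L : ℕ)
    (x y : Fin n → Bool) :
    mlEval a (fun i => pmOne (if i.val < L then x i else y i))
      = ∑ J, restCoeff a L (fun i => pmOne (x i)) J * chi J y := by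
  calc mlEval a (fun i => pmOne (if i.val < L then x i else y i))
      = ∑ I, (a I * ∏ i ∈ headPart L I, pmOne (x i)) * chi (tailPart L I) y := by
        refine sum_congr rfl fun I _ => ?_
        rw [← prod_filter_mul_prod_filter_not I fun i => i.val < L, mul_assoc, chi, tailPart]
        congr 2
        · exact prod_congr rfl fun i hi => by rw [if_pos (mem_filter.mp hi).2]
        · simp only [not_lt]
          exact prod_congr rfl fun i hi => by rw [if_neg (not_lt.mpr (mem_filter.mp hi).2)]
    _ = ∑ J, ∑ I ∈ univ.filter (fun I => tailPart L I = J),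
          (a I * ∏ i ∈ headPart L I, pmOne (x i)) * chi J y := by
        rw [← sum_fiberwise univ (tailPart L)]
        exact sum_congr rfl fun J _ => sum_congr rfl fun I hI => by rw [(mem_filter.mp hI).2]
    _ = ∑ J, restCoeff a L (fun i => pmOne (x i)) J * chi J y := by
        simp_rw [restCoeff_eq_sum, sum_mul]

lemma restCoeff_empty (a : Finset (Fin n) → ℝ) (L : ℕ) (x : Fin n → Bool) :
    restCoeff a L (fun i => pmOne (x i)) ∅ = a ∅ + headPoly a L x := by
  rw [restCoeff_eq_sum, filter_tailPart_eq_empty, sum_insert (by simp [headSupport])]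
  congr 1
  · simp [headPart]
  · refine sum_congr rfl fun I hI => ?_
    have h := headPart_union_tailPart L I
    rw [(mem_headSupport.mp hI).2, union_empty] at h
    rw [h, chi]

lemma mlEval_sub_eq (a : Finset (Fin n) → ℝ) (L : ℕ) (θ : ℝ) (x y : Fin n → Bool) :
    mlEval a (fun i => pmOne (if i.val < L then x i else y i)) - θ
      = (a ∅ - θ + headPoly a L x)
        + ∑ J ∈ univ.erase ∅, restCoeff a L (fun i => pmOne (x i)) J * chi J y := by
  rw [mlEval_eq_sum_restCoeff_mul_chi, ← add_sum_erase _ _ (mem_univ ∅), chi_empty, mul_one,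
    restCoeff_empty]
  ring

lemma sum_sq_restCoeff (a : Finset (Fin n) → ℝ) (L : ℕ) (J : Finset (Fin n)) :
    ∑ x : Fin n → Bool, restCoeff a L (fun i => pmOne (x i)) J ^ 2
      = 2 ^ n * ∑ I ∈ univ.filter (fun I => tailPart L I = J), a I ^ 2 := by
  have hinj : Set.InjOn (headPart (n := n) L) ↑(univ.filter fun I => tailPart L I = J) :=
    fun I hI I' hI' h => by
      simp only [coe_filter, mem_univ, true_and, Set.mem_ofPred_eq] at hI hI'
      rw [← headPart_union_tailPart L I, ← headPart_union_tailPart L I', h, hI, hI']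
  simp only [restCoeff_eq_sum]
  exact (sum_sq_sum_mul_chi _ a (headPart L) hinj).trans (by rw [Fintype.card_fin])

lemma sum_restVar (a : Finset (Fin n) → ℝ) (L : ℕ) :
    ∑ x, restVar a L x = 2 ^ n * tailMass a L := by
  have hempty :
      ∑ I ∈ univ.filter (fun I => tailPart L I = ∅), a I ^ 2 = a ∅ ^ 2 + headMass a L := by
    rw [filter_tailPart_eq_empty, sum_insert (by simp [headSupport]), headMass]
  simp only [restVar]
  rw [sum_comm, sum_congr rfl fun J _ => sum_sq_restCoeff a L J, ← mul_sum,
    sum_erase_eq_sub (mem_univ _), sum_fiberwise, hempty, sum_sq_eq_add_headMass_add_tailMass]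
  ring

lemma sum_headPoly (a : Finset (Fin n) → ℝ) (L : ℕ) : ∑ x, headPoly a L x = 0 :=
  sum_sum_mul_chi_eq_zero _ a id fun _ hI => (mem_headSupport.mp hI).1

lemma sum_headPoly_sq (a : Finset (Fin n) → ℝ) (L : ℕ) :
    ∑ x, headPoly a L x ^ 2 = 2 ^ n * headMass a L :=
  (sum_sq_sum_mul_chi _ a id (Set.injOn_id _)).trans (by rw [Fintype.card_fin]; rfl)

lemma sum_headPoly_pow_four_le {d : ℕ} {a : Finset (Fin n) → ℝ} (hdeg : DegLE a d) (L : ℕ) :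
    ∑ x, headPoly a L x ^ 4 ≤ 2 ^ n * 9 ^ d * headMass a L ^ 2 := by
  set c : Finset (Fin n) → ℝ := fun I => if I ∈ headSupport L then a I else 0
  have hc : ∀ I ⊆ univ, c I ≠ 0 → I.card ≤ d := fun I _ h =>
    hdeg I fun ha => h (by simp [c, ha])
  have hpoly : ∀ x, headPoly a L x = ∑ I ∈ univ.powerset, c I * chi I x := fun x => by
    simp only [powerset_univ, c, ite_mul, zero_mul, sum_ite_mem, univ_inter, headPoly]
  have hmass : headMass a L = ∑ I ∈ univ.powerset, c I ^ 2 := by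
    simp only [powerset_univ, c, ite_pow, headMass]
    simp
  simp only [hpoly, hmass]
  exact (sum_pow_four_le univ d c hc).trans_eq (by rw [Fintype.card_fin])

lemma card_le_card_filter_le_abs_add_headPoly {d : ℕ} {a : Finset (Fin n) → ℝ}
    (hdeg : DegLE a d) (L : ℕ) (c : ℝ) :
    (2 : ℝ) ^ n
      ≤ 16 * 9 ^ d * #{x | √(headMass a L) / (4 * 3 ^ d) ≤ |c + headPoly a L x|} := by
  have hcard : (Fintype.card (Fin n → Bool) : ℝ) = 2 ^ n := by simp
  have h9 : (9 : ℝ) ^ d = (3 ^ d) ^ 2 := by rw [← pow_mul, mul_comm, pow_mul]; norm_num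
  rcases (headMass_nonneg a L).eq_or_lt with h0 | hpos
  · rw [← h0, Real.sqrt_zero, zero_div, filter_true_of_mem fun x _ => abs_nonneg _, card_univ,
      hcard]
    nlinarith [one_le_pow₀ (by norm_num : (1 : ℝ) ≤ 9) (n := d),
      pow_pos (two_pos (α := ℝ)) n]
  · have h := card_le_card_filter_le_abs_add (headPoly a L) (Real.sqrt_pos.mpr hpos)
      (by positivity : (0 : ℝ) < 3 ^ d) (sum_headPoly a L)
      (by rw [sum_headPoly_sq, hcard, Real.sq_sqrt hpos.le])
      ((sum_headPoly_pow_four_le hdeg L).trans_eq (by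
        rw [hcard, h9, show √(headMass a L) ^ 4 = (√(headMass a L) ^ 2) ^ 2 by ring,
          Real.sq_sqrt hpos.le]
        ring)) c
    rwa [hcard, ← h9] at h

end Restriction

section CriticalIndex

variable {n : ℕ} {a : Finset (Fin n) → ℝ} {ε : ℝ}

lemma sigmaSq_nonneg (a : Finset (Fin n) → ℝ) (k : ℕ) : 0 ≤ sigmaSq a k :=
  sum_nonneg fun _ _ => sum_nonneg fun _ _ => sq_nonneg _

lemma sigmaSq_eq_wsq_add (a : Finset (Fin n) → ℝ) (i : Fin n) :
    sigmaSq a i = wsq a i + sigmaSq a (i + 1) := by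
  have h : univ.filter (fun j : Fin n => (i : ℕ) ≤ j)
      = insert i (univ.filter fun j : Fin n => (i : ℕ) + 1 ≤ j) := by
    ext j
    simp only [mem_filter, mem_univ, true_and, mem_insert, Fin.ext_iff]
    omega
  rw [sigmaSq, h, sum_insert (by simp)]
  rfl

lemma sigmaSq_succ_le_of_lt_critIndex (hord : OrderedWeights a) {k : ℕ}
    (hk : k < critIndex a ε) : sigmaSq a (k + 1) ≤ (1 - ε ^ 2) * sigmaSq a k := by
  obtain ⟨j, hkj, hj⟩ : ∃ j : Fin n, k ≤ (j : ℕ) ∧ ε ^ 2 * sigmaSq a k < wsq a j := by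
    by_contra! h
    exact hk.not_ge (Nat.sInf_le h : critIndex a ε ≤ k)
  have hw := hord ⟨k, hkj.trans_lt j.isLt⟩ j hkj
  have hσ := sigmaSq_eq_wsq_add a ⟨k, hkj.trans_lt j.isLt⟩
  simp only at hσ
  linarith

lemma sigmaSq_le_pow_mul_of_le_critIndex (hord : OrderedWeights a) (hε : ε ^ 2 ≤ 1) {k : ℕ}
    (hk : k ≤ critIndex a ε) : sigmaSq a k ≤ (1 - ε ^ 2) ^ k * sigmaSq a 0 := by
  induction k with
  | zero => simp
  | succ k ih =>
    calc sigmaSq a (k + 1)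
        ≤ (1 - ε ^ 2) * sigmaSq a k := sigmaSq_succ_le_of_lt_critIndex hord hk
      _ ≤ (1 - ε ^ 2) * ((1 - ε ^ 2) ^ k * sigmaSq a 0) := by
          gcongr
          exact ih (Nat.le_of_succ_le hk)
      _ = (1 - ε ^ 2) ^ (k + 1) * sigmaSq a 0 := by ring

lemma one_sub_sq_pow_le_pow (hε0 : 0 < ε) (hε1 : ε ≤ 1) {m L : ℕ}
    (hL : m * Real.log (1 / ε) / ε ^ 2 ≤ L) : (1 - ε ^ 2) ^ L ≤ ε ^ m := by
  have hexp : m * Real.log ε ≥ L * -ε ^ 2 := by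
    rw [div_le_iff₀ (by positivity), one_div, Real.log_inv] at hL
    linarith
  calc (1 - ε ^ 2) ^ L ≤ Real.exp (-ε ^ 2) ^ L := by
        gcongr
        · nlinarith
        · linarith [Real.add_one_le_exp (-ε ^ 2)]
    _ = Real.exp (L * -ε ^ 2) := (Real.exp_nat_mul _ L).symm
    _ ≤ Real.exp (m * Real.log ε) := Real.exp_le_exp.mpr hexp
    _ = ε ^ m := by rw [Real.exp_nat_mul, Real.exp_log hε0]

lemma pow_succ_mul_le_half (hε0 : 0 ≤ ε) (hε : ε ≤ 1 / 2) (d : ℕ) :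
    ε ^ (d + 1) * d ≤ 1 / 2 := by
  have hd : (d : ℝ) ≤ 2 ^ d := by exact_mod_cast Nat.lt_two_pow_self.le
  calc ε ^ (d + 1) * d ≤ (1 / 2) ^ (d + 1) * 2 ^ d := by gcongr
    _ = 1 / 2 := by rw [pow_succ, mul_right_comm, ← mul_pow]; norm_num

lemma tailMass_le_of_le_critIndex {d : ℕ} (hdeg : DegLE a d) (hord : OrderedWeights a)
    (hε0 : 0 < ε) (hε : ε ≤ 1 / 2) {L : ℕ}
    (hL : (d + 1 : ℕ) * Real.log (1 / ε) / ε ^ 2 ≤ L) (hLcrit : L ≤ critIndex a ε) :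
    tailMass a L ≤ 2 * d * ε * headMass a L := by
  have hdecay : tailMass a L ≤ ε ^ (d + 1) * sigmaSq a 0 :=
    calc tailMass a L ≤ sigmaSq a L := tailMass_le_sigmaSq a L
      _ ≤ (1 - ε ^ 2) ^ L * sigmaSq a 0 :=
          sigmaSq_le_pow_mul_of_le_critIndex hord (by nlinarith) hLcrit
      _ ≤ ε ^ (d + 1) * sigmaSq a 0 := by
          gcongr
          · exact sigmaSq_nonneg a 0
          · exact one_sub_sq_pow_le_pow hε0 (by linarith) hL
  have hpow : ε ^ (d + 1) ≤ ε := pow_le_of_le_one hε0.le (by linarith) (by omega)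
  have hV := headMass_nonneg a L
  nlinarith [mul_le_mul_of_nonneg_left (sigmaSq_zero_le hdeg L) (pow_nonneg hε0.le (d + 1)),
    mul_le_mul_of_nonneg_right (pow_succ_mul_le_half hε0.le hε d) (tailMass_nonneg a L),
    mul_le_mul_of_nonneg_right hpow (mul_nonneg (Nat.cast_nonneg d) hV)]

end CriticalIndex

section Determining

variable {n : ℕ}

def cubeProb (n : ℕ) (p : (Fin n → Bool) → Prop) [DecidablePred p] : ℝ :=
  (1 / 2 ^ n : ℝ) * ∑ x : Fin n → Bool, if p x then 1 else 0

/-- An `abbrev`, so that instance search sees through it and `cubeProb n (IsDetermining …)`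
unfolds to the probability written out in `random_restriction_determining`. -/
abbrev IsDetermining (a : Finset (Fin n) → ℝ) (θ : ℝ) (L : ℕ) (η : ℝ)
    (x : Fin n → Bool) : Prop :=
  ∃ b : Bool, cubeProb n (fun y => decide (0 ≤ mlEval a
    (fun i => pmOne (if i.val < L then x i else y i)) - θ) ≠ b) ≤ η

lemma cubeProb_eq_card_div (p : (Fin n → Bool) → Prop) [DecidablePred p] :
    cubeProb n p = #{x | p x} / 2 ^ n := by
  rw [cubeProb, sum_boole]
  ring

lemma cubeProb_le_one (p : (Fin n → Bool) → Prop) [DecidablePred p] : cubeProb n p ≤ 1 := by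
  rw [cubeProb_eq_card_div, div_le_one (by positivity)]
  exact_mod_cast (card_filter_le _ _).trans (by simp)

lemma cubeProb_eq_one {p : (Fin n → Bool) → Prop} [DecidablePred p] (h : ∀ x, p x) :
    cubeProb n p = 1 := by
  rw [cubeProb_eq_card_div, filter_true_of_mem fun x _ => h x]
  simp

lemma isDetermining_of_one_le {a : Finset (Fin n) → ℝ} {θ η : ℝ} {L : ℕ} (hη : 1 ≤ η)
    (x : Fin n → Bool) : IsDetermining a θ L η x :=
  ⟨true, (cubeProb_le_one _).trans hη⟩

lemma isDetermining_of_restVar_le {a : Finset (Fin n) → ℝ} {θ : ℝ} {L : ℕ}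
    {x : Fin n → Bool} {t η : ℝ} (ht : 0 ≤ t) (hη : 0 ≤ η)
    (hu : t ≤ |a ∅ - θ + headPoly a L x|)
    (hvar : restVar a L x ≤ η * t ^ 2) : IsDetermining a θ L η x := by
  refine ⟨decide (0 ≤ a ∅ - θ + headPoly a L x), ?_⟩
  rw [cubeProb_eq_card_div, div_le_iff₀ (by positivity)]
  simp_rw [mlEval_sub_eq, ne_eq, decide_eq_decide]
  refine (card_filter_sign_ne_le _ ht hu (by positivity) ?_).trans_eq (mul_comm _ _)
  calc ∑ y, (∑ J ∈ univ.erase ∅, restCoeff a L (fun i => pmOne (x i)) J * chi J y) ^ 2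
      = 2 ^ n * restVar a L x :=
        (sum_sq_sum_mul_chi _ _ id (Set.injOn_id _)).trans (by rw [Fintype.card_fin]; rfl)
    _ ≤ 2 ^ n * (η * t ^ 2) := by gcongr
    _ = 2 ^ n * η * t ^ 2 := by ring

theorem one_div_le_cubeProb_isDetermining {d : ℕ} {a : Finset (Fin n) → ℝ} (hdeg : DegLE a d)
    {L : ℕ} {κ : ℝ} (hκ : 0 ≤ κ) (hmass : tailMass a L ≤ κ * headMass a L) (θ : ℝ) :
    1 / (32 * 9 ^ d) ≤ cubeProb n (IsDetermining a θ L (512 * 81 ^ d * κ)) := by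
  set V := headMass a L
  set t := √V / (4 * 3 ^ d)
  set A := univ.filter fun x => t ≤ |a ∅ - θ + headPoly a L x|
  set B := univ.filter fun x => 32 * 9 ^ d * tailMass a L < restVar a L x
  set D := univ.filter fun x => IsDetermining a θ L (512 * 81 ^ d * κ) x
  have hV : 0 ≤ V := headMass_nonneg a L
  have ht : t ^ 2 = V / (16 * 9 ^ d) := by
    rw [div_pow, Real.sq_sqrt hV, mul_pow, ← pow_mul, mul_comm d, pow_mul]
    norm_num
  have hA : (2 : ℝ) ^ n ≤ 16 * 9 ^ d * #A := card_le_card_filter_le_abs_add_headPoly hdeg L _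
  have hB : (#B : ℝ) * (32 * 9 ^ d) ≤ 2 ^ n := by
    have h := card_filter_lt_mul_le (restVar a L) (fun x => sum_nonneg fun _ _ => sq_nonneg _)
      (tailMass_nonneg a L) (c := 32 * 9 ^ d) (by simp [sum_restVar])
    simpa using h
  have hAD : A ⊆ D ∪ B := fun x hx => by
    by_cases hxB : x ∈ B
    · exact mem_union_right _ hxB
    refine mem_union_left _ (mem_filter.mpr ⟨mem_univ x, ?_⟩)
    refine isDetermining_of_restVar_le (by positivity) (by positivity) (mem_filter.mp hx).2 ?_
    calc restVar a L x ≤ 32 * 9 ^ d * tailMass a L := by simpa [B] using hxB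
      _ ≤ 32 * 9 ^ d * (κ * V) := by gcongr
      _ = 512 * 81 ^ d * κ * t ^ 2 := by
        rw [ht, show (81 : ℝ) ^ d = 9 ^ d * 9 ^ d by rw [← mul_pow]; norm_num]
        field_simp
        ring
  have hcard : (#A : ℝ) ≤ #D + #B := by
    exact_mod_cast (card_le_card hAD).trans (card_union_le _ _)
  calc 1 / (32 * 9 ^ d) ≤ (#D : ℝ) / 2 ^ n := by
        rw [div_le_div_iff₀ (by positivity) (by positivity)]
        linarith [mul_le_mul_of_nonneg_left hcard (by positivity : (0 : ℝ) ≤ 32 * 9 ^ d)]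
    _ = cubeProb n (IsDetermining a θ L (512 * 81 ^ d * κ)) := (cubeProb_eq_card_div _).symm

end Determining

end RandomRestriction

open RandomRestriction

/-- Lemma 5.2: for each `d ≥ 1` there are constants `b_d, c_d` and
`δ_d > 0` such that for `f = sign(P - θ)` with `P` multilinear of degree at most `d`
(weights decreasing), if the `ε`-critical index is at least `L = ⌈c_d log(1/ε)/ε²⌉`, then
a uniformly random assignment of the first `L` variables is `(b_d·ε)`-determining with
probability at least `δ_d`. -/
theorem random_restriction_determining (d : ℕ) (hd : 1 ≤ d) :
    ∃ (bd cd δd : ℝ), 0 < δd ∧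
      ∀ (ε : ℝ), 0 < ε → ε < 1 →
        ∀ (n : ℕ) (a : Finset (Fin n) → ℝ) (θ : ℝ), DegLE a d → OrderedWeights a →
          ∀ L : ℕ, L = ⌈cd * Real.log (1 / ε) / ε ^ 2⌉₊ → L ≤ critIndex a ε →
            δd ≤ (1 / 2 ^ n : ℝ) * ∑ x : Fin n → Bool,
              (if ∃ b : Bool, (1 / 2 ^ n : ℝ) * (∑ y : Fin n → Bool,
                  (if decide (0 ≤ mlEval a
                        (fun i => pmOne (if i.val < L then x i else y i)) - θ) ≠ b
                    then (1 : ℝ) else 0)) ≤ bd * ε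
                then (1 : ℝ) else 0) := by
  refine ⟨1024 * d * 81 ^ d, (d + 1 : ℕ), 1 / (32 * 9 ^ d), by positivity, ?_⟩
  intro ε hε0 hε1 n a θ hdeg hord L hL hLcrit
  rcases le_or_gt ε (1 / 2) with hε | hε
  · have hmass := tailMass_le_of_le_critIndex hdeg hord hε0 hε (hL ▸ Nat.le_ceil _) hLcrit
    have h := one_div_le_cubeProb_isDetermining hdeg (by positivity) hmass θ
    rw [show 512 * 81 ^ d * (2 * d * ε) = 1024 * d * 81 ^ d * ε by ring] at h
    exact h
  · have hd81 : (1 : ℝ) ≤ d * 81 ^ d :=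
      one_le_mul_of_one_le_of_one_le (by exact_mod_cast hd) (one_le_pow₀ (by norm_num))
    have hη : 1 ≤ 1024 * d * 81 ^ d * ε := by nlinarith
    calc 1 / (32 * 9 ^ d) ≤ (1 : ℝ) := by
          rw [div_le_one (by positivity)]
          linarith [one_le_pow₀ (by norm_num : (1 : ℝ) ≤ 9) (n := d)]
      _ = cubeProb n (IsDetermining a θ L (1024 * d * 81 ^ d * ε)) :=
          (cubeProb_eq_one (isDetermining_of_one_le hη)).symm

end
end

section
/- For every integer d ≥ 1 there exist constants α_d > 0 and β_d > 0 such that for every multilinear polynomial Q of degree at most d on n variables and X uniform on {-1,1}^n, Pr[ Q(X) ≥ E[Q(X)] + α_d · σ(Q) ] ≥ β_d, where σ(Q) = √Var(Q(X)). In particular, Pr[ Q(X) ≥ E[Q(X)] ] ≥ β_d. -/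
/-!
Let `R = Q - 𝔼 Q`, again multilinear of degree at most `d`, and `σ² = 𝔼 R²`. Bonami's lemma
`𝔼 R⁴ ≤ 9^d σ⁴`, proved by induction on `n` by splitting off one variable, `R = A + X₀ B`, gives
`𝔼 |R| ≥ 3σ / (8·3^d)`. Since `𝔼 R = 0`, half of this mass lies above the mean, so
`𝔼[R; R ≥ t] ≥ σ / (8·3^d)` for `t = σ / (16·3^d)`, and Cauchy–Schwarz turns this into
`Pr[R ≥ t] ≥ 1 / (64·9^d)`.
-/

open Finset MeasureTheory ProbabilityTheory
open scoped Classical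

noncomputable section

open scoped BigOperators

section FourthMoment

variable {ι : Type*} [Fintype ι]

lemma expect_sub_expect_sq [Nonempty ι] (f : ι → ℝ) :
    𝔼 i, (f i - 𝔼 j, f j) ^ 2 = 𝔼 i, f i ^ 2 - (𝔼 i, f i) ^ 2 := by
  simp only [sub_sq, expect_add_distrib, expect_sub_distrib, ← expect_mul, ← mul_expect,
    Fintype.expect_const]
  ring

lemma sq_mul_sq_le_pow_three_mul_abs_add (r : ℝ) {t : ℝ} (ht : 0 ≤ t) :
    t ^ 2 * r ^ 2 ≤ t ^ 3 * |r| + r ^ 4 := by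
  rw [← sq_abs r, ← (by decide : Even 4).pow_abs r]
  rcases le_total |r| t with h | h
  · nlinarith [mul_le_mul_of_nonneg_left h (mul_nonneg (sq_nonneg t) (abs_nonneg r))]
  · nlinarith [mul_le_mul_of_nonneg_left (pow_le_pow_left₀ ht h 2) (sq_nonneg |r|),
      mul_nonneg (pow_nonneg ht 3) (abs_nonneg r)]

lemma three_mul_sqrt_le_expect_abs (f : ι → ℝ) {C : ℝ} (hC : 0 < C)
    (h4 : 𝔼 i, f i ^ 4 ≤ C ^ 2 * (𝔼 i, f i ^ 2) ^ 2) :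
    3 * √(𝔼 i, f i ^ 2) ≤ 8 * C * 𝔼 i, |f i| := by
  set σ := √(𝔼 i, f i ^ 2)
  have hσ2 : σ ^ 2 = 𝔼 i, f i ^ 2 := Real.sq_sqrt (expect_nonneg fun i _ => sq_nonneg (f i))
  have havg : (2 * C * σ) ^ 2 * σ ^ 2 ≤ (2 * C * σ) ^ 3 * 𝔼 i, |f i| + C ^ 2 * (σ ^ 2) ^ 2 := by
    calc (2 * C * σ) ^ 2 * σ ^ 2 = 𝔼 i, (2 * C * σ) ^ 2 * f i ^ 2 := by rw [hσ2, mul_expect]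
      _ ≤ 𝔼 i, ((2 * C * σ) ^ 3 * |f i| + f i ^ 4) :=
        expect_le_expect fun i _ => sq_mul_sq_le_pow_three_mul_abs_add _ (by positivity)
      _ ≤ _ := by rw [expect_add_distrib, ← mul_expect, hσ2]; gcongr
  have hσ0 : 0 ≤ σ := Real.sqrt_nonneg _
  rcases hσ0.eq_or_lt with hσ | hσ
  · rw [← hσ, mul_zero]; positivity
  · nlinarith [pow_pos hσ 3, pow_pos hC 2, mul_pos (pow_pos hC 2) (pow_pos hσ 3)]

lemma expect_abs_le_of_expect_eq_zero [Nonempty ι] (f : ι → ℝ) (h0 : 𝔼 i, f i = 0) {t : ℝ}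
    (ht : 0 ≤ t) :
    𝔼 i, |f i| ≤ 2 * t + 2 * 𝔼 i, f i * (if t ≤ f i then 1 else 0) := by
  have hpt : ∀ r : ℝ, |r| + r ≤ 2 * t + 2 * (r * if t ≤ r then 1 else 0) := by
    intro r
    split_ifs with h
    · rw [abs_of_nonneg (ht.trans h)]; linarith
    · rcases abs_cases r with ⟨hr, -⟩ | ⟨hr, -⟩ <;> linarith
  calc 𝔼 i, |f i| = 𝔼 i, (|f i| + f i) := by rw [expect_add_distrib, h0, add_zero]
    _ ≤ 𝔼 i, (2 * t + 2 * (f i * if t ≤ f i then 1 else 0)) := expect_le_expect fun i _ => hpt _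
    _ = _ := by rw [expect_add_distrib, Fintype.expect_const, ← mul_expect]

/-- Paley–Zygmund-type argument: the mass `𝔼 |f| ≥ 3σ / 8C` is split evenly around the mean `0`,
and Cauchy–Schwarz bounds the part above `t` by `σ √Pr[f ≥ t]`. -/
theorem le_expect_boole_of_fourth_moment_le [Nonempty ι] (f : ι → ℝ) {C : ℝ} (hC : 1 ≤ C)
    (h0 : 𝔼 i, f i = 0) (h4 : 𝔼 i, f i ^ 4 ≤ C ^ 2 * (𝔼 i, f i ^ 2) ^ 2) :
    1 / (64 * C ^ 2) ≤ 𝔼 i, if 1 / (16 * C) * √(𝔼 j, f j ^ 2) ≤ f i then 1 else 0 := by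
  have hC0 : 0 < C := one_pos.trans_le hC
  set σ := √(𝔼 i, f i ^ 2)
  set t := 1 / (16 * C) * σ
  set E := 𝔼 i, f i * if t ≤ f i then 1 else 0
  set p := 𝔼 i, if t ≤ f i then (1 : ℝ) else 0
  have hσ2 : σ ^ 2 = 𝔼 i, f i ^ 2 := Real.sq_sqrt (expect_nonneg fun i _ => sq_nonneg (f i))
  have hσ0 : 0 ≤ σ := Real.sqrt_nonneg _
  rcases hσ0.eq_or_lt with hσ | hσ
  · have hf : ∀ i, f i = 0 := by
      have := (Fintype.expect_eq_zero_iff_of_nonneg fun i => sq_nonneg (f i)).mp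
        (by rw [← hσ2, ← hσ]; ring)
      exact fun i => pow_eq_zero_iff two_ne_zero |>.mp (congrFun this i)
    have hp : p = 1 := by simp [p, t, ← hσ, hf]
    rw [hp, div_le_one (by positivity)]
    nlinarith
  have hm : 3 * σ ≤ 8 * C * 𝔼 i, |f i| := three_mul_sqrt_le_expect_abs f hC0 h4
  have habs := expect_abs_le_of_expect_eq_zero f h0 (t := t) (by positivity)
  have hCS : E ^ 2 ≤ σ ^ 2 * p := by
    have hsq : ∀ i, (if t ≤ f i then (1 : ℝ) else 0) ^ 2 = if t ≤ f i then 1 else 0 := by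
      intro i; split_ifs <;> norm_num
    calc E ^ 2 ≤ (𝔼 i, f i ^ 2) * 𝔼 i, (if t ≤ f i then (1 : ℝ) else 0) ^ 2 :=
          expect_mul_sq_le_sq_mul_sq _ _ _
      _ = σ ^ 2 * p := by simp only [hsq, hσ2, p]
  have htail : σ / (8 * C) ≤ E := by
    have ht : 16 * C * t = σ := by simp only [t]; field_simp
    rw [div_le_iff₀ (by positivity)]
    nlinarith
  have : σ ^ 2 * (1 / (64 * C ^ 2)) ≤ σ ^ 2 * p := by
    calc σ ^ 2 * (1 / (64 * C ^ 2)) = (σ / (8 * C)) ^ 2 := by field_simp; ring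
      _ ≤ E ^ 2 := pow_le_pow_left₀ (by positivity) htail 2
      _ ≤ _ := hCS
  exact le_of_mul_le_mul_left this (by positivity)

theorem le_expect_boole_of_central_fourth_moment_le [Nonempty ι] (g : ι → ℝ) {C : ℝ}
    (hC : 1 ≤ C)
    (h4 : 𝔼 i, (g i - 𝔼 j, g j) ^ 4 ≤ C ^ 2 * (𝔼 i, (g i - 𝔼 j, g j) ^ 2) ^ 2) :
    1 / (64 * C ^ 2) ≤ 𝔼 i,
      if 𝔼 j, g j + 1 / (16 * C) * √(𝔼 j, (g j - 𝔼 k, g k) ^ 2) ≤ g i then 1 else 0 := by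
  have h0 : 𝔼 i, (g i - 𝔼 j, g j) = 0 := by
    rw [expect_sub_distrib, Fintype.expect_const, sub_self]
  simpa only [le_sub_iff_add_le'] using
    le_expect_boole_of_fourth_moment_le (fun i => g i - 𝔼 j, g j) hC h0 h4

end FourthMoment

section BooleanCube

variable {n : ℕ}

lemma cube_average_eq_expect (g : (Fin n → Bool) → ℝ) :
    (1 / 2 ^ n : ℝ) * ∑ x, g x = 𝔼 x, g x := by
  rw [Fintype.expect_eq_sum_div_card, Fintype.card_fun, Fintype.card_bool, Fintype.card_fin]
  push_cast
  ring

lemma expect_cube_succ (f : (Fin (n + 1) → Bool) → ℝ) :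
    𝔼 x, f x = 𝔼 x : Fin n → Bool, (f (Fin.cons true x) + f (Fin.cons false x)) / 2 := by
  rw [← Fintype.expect_equiv (Fin.consEquiv fun _ => Bool) (fun p => f (Fin.cons p.1 p.2)) f
    (fun _ => rfl), ← univ_product_univ, expect_product, expect_comm]
  refine expect_congr rfl fun x _ => ?_
  rw [Fintype.expect_eq_sum_div_card, Fintype.sum_bool, Fintype.card_bool, Nat.cast_ofNat]

@[simp] lemma pmOne_true : pmOne true = 1 := rfl

@[simp] lemma pmOne_false : pmOne false = -1 := rfl

lemma pmOne_cons (b : Bool) (x : Fin n → Bool) :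
    (fun i => pmOne ((Fin.cons b x : Fin (n + 1) → Bool) i))
      = Fin.cons (pmOne b) fun i => pmOne (x i) := by
  funext i
  cases i using Fin.cases <;> simp

end BooleanCube

section MultilinearPolynomial

variable {n d : ℕ}

lemma mlEval_sub (a b : Finset (Fin n) → ℝ) (x : Fin n → ℝ) :
    mlEval (a - b) x = mlEval a x - mlEval b x := by
  simp only [mlEval, Pi.sub_apply, sub_mul, sum_sub_distrib]

lemma mlEval_single_empty (c : ℝ) (x : Fin n → ℝ) : mlEval (Pi.single ∅ c) x = c := by
  simp [mlEval, Pi.single_apply]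

lemma DegLE.sub_single_empty {a : Finset (Fin n) → ℝ} (h : DegLE a d) (c : ℝ) :
    DegLE (a - Pi.single ∅ c) d := by
  intro I hI
  rcases eq_or_ne I ∅ with rfl | hI'
  · simp
  · exact h I (by simpa [Pi.single_apply, hI'] using hI)

lemma sum_finset_fin_succ {M : Type*} [AddCommMonoid M] (f : Finset (Fin (n + 1)) → M) :
    ∑ I, f I = ∑ J : Finset (Fin n),
      (f (J.map (Fin.succEmb n)) + f (insert 0 (J.map (Fin.succEmb n)))) := by
  rw [← powerset_univ, Fin.univ_succ, cons_eq_insert, sum_powerset_insert (by simp),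
    sum_add_distrib, map_eq_image, powerset_image, sum_image, sum_image, powerset_univ]
  · simp [map_eq_image]
  all_goals exact fun s _ t _ h => image_injective (Fin.succ_injective n) h

def coeffTail (a : Finset (Fin (n + 1)) → ℝ) (J : Finset (Fin n)) : ℝ :=
  a (J.map (Fin.succEmb n))

def coeffDeriv (a : Finset (Fin (n + 1)) → ℝ) (J : Finset (Fin n)) : ℝ :=
  a (insert 0 (J.map (Fin.succEmb n)))

lemma mlEval_cons (a : Finset (Fin (n + 1)) → ℝ) (t : ℝ) (y : Fin n → ℝ) :
    mlEval a (Fin.cons t y) = mlEval (coeffTail a) y + t * mlEval (coeffDeriv a) y := by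
  simp only [mlEval, sum_finset_fin_succ, sum_add_distrib, mul_sum, coeffTail, coeffDeriv]
  congr 1 <;> refine sum_congr rfl fun J _ => ?_
  · simp [prod_map]
  · rw [prod_insert (by simp), prod_map]
    simp only [Fin.coe_succEmb, Fin.cons_succ, Fin.cons_zero]
    ring

lemma DegLE.coeffTail {a : Finset (Fin (n + 1)) → ℝ} (h : DegLE a d) : DegLE (coeffTail a) d :=
  fun J hJ => by simpa using h _ hJ

lemma DegLE.coeffDeriv {a : Finset (Fin (n + 1)) → ℝ} (h : DegLE a (d + 1)) :
    DegLE (coeffDeriv a) d := fun J hJ => by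
  simpa [card_insert_of_notMem] using h _ hJ

lemma coeffDeriv_eq_zero {a : Finset (Fin (n + 1)) → ℝ} (h : DegLE a 0) : coeffDeriv a = 0 := by
  ext J
  by_contra hJ
  simpa [card_insert_of_notMem] using h _ hJ

end MultilinearPolynomial

section Bonami

variable {n d : ℕ}

lemma add_six_mul_add_le {A₂ B₂ A₄ B₄ M K : ℝ} (hK : 0 ≤ K) (hA₂ : 0 ≤ A₂) (hB₂ : 0 ≤ B₂)
    (hB₄ : 0 ≤ B₄) (hA : A₄ ≤ K * A₂ ^ 2) (hB : 9 * B₄ ≤ K * B₂ ^ 2) (hM : M ^ 2 ≤ A₄ * B₄) :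
    A₄ + 6 * M + B₄ ≤ K * (A₂ + B₂) ^ 2 := by
  have hM' : 3 * M ≤ K * (A₂ * B₂) := by
    refine le_of_sq_le_sq ?_ (by positivity)
    calc (3 * M) ^ 2 ≤ (K * A₂ ^ 2) * (9 * B₄) := by nlinarith [mul_le_mul_of_nonneg_right hA hB₄]
      _ ≤ (K * A₂ ^ 2) * (K * B₂ ^ 2) := by gcongr
      _ = _ := by ring
  nlinarith [mul_nonneg hK (sq_nonneg B₂)]

/-- **Bonami's lemma**. -/
theorem expect_mlEval_pow_four_le {a : Finset (Fin n) → ℝ} (h : DegLE a d) :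
    𝔼 x : Fin n → Bool, mlEval a (fun i => pmOne (x i)) ^ 4
      ≤ 9 ^ d * (𝔼 x : Fin n → Bool, mlEval a (fun i => pmOne (x i)) ^ 2) ^ 2 := by
  induction n generalizing d with
  | zero =>
    simp only [Fintype.expect_eq_sum_div_card, Fintype.sum_unique, Fintype.card_unique,
      Nat.cast_one, div_one]
    rw [← pow_mul]
    exact le_mul_of_one_le_left (by positivity) (one_le_pow₀ (by norm_num))
  | succ n ih =>
    set Q := fun x : Fin (n + 1) → Bool => mlEval a fun i => pmOne (x i)
    set A := fun x : Fin n → Bool => mlEval (coeffTail a) fun i => pmOne (x i)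
    set B := fun x : Fin n → Bool => mlEval (coeffDeriv a) fun i => pmOne (x i)
    have hsplit : ∀ b x, Q (Fin.cons b x) = A x + pmOne b * B x :=
      fun b x => by simp only [Q, pmOne_cons, mlEval_cons, A, B]
    have h2 : 𝔼 x, Q x ^ 2 = 𝔼 x, A x ^ 2 + 𝔼 x, B x ^ 2 := by
      rw [expect_cube_succ, ← expect_add_distrib]
      refine expect_congr rfl fun x _ => ?_
      simp only [hsplit, pmOne_true, pmOne_false]
      ring
    have h4 : 𝔼 x, Q x ^ 4 = 𝔼 x, A x ^ 4 + 6 * 𝔼 x, A x ^ 2 * B x ^ 2 + 𝔼 x, B x ^ 4 := by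
      rw [expect_cube_succ, mul_expect, ← expect_add_distrib, ← expect_add_distrib]
      refine expect_congr rfl fun x _ => ?_
      simp only [hsplit, pmOne_true, pmOne_false]
      ring
    have hA : 𝔼 x, A x ^ 4 ≤ 9 ^ d * (𝔼 x, A x ^ 2) ^ 2 := ih h.coeffTail
    have hB : 9 * 𝔼 x, B x ^ 4 ≤ 9 ^ d * (𝔼 x, B x ^ 2) ^ 2 := by
      cases d with
      | zero => simp [B, coeffDeriv_eq_zero h, mlEval]
      | succ e =>
        rw [pow_succ, mul_comm _ (9 : ℝ), mul_assoc]
        exact mul_le_mul_of_nonneg_left (ih h.coeffDeriv) (by norm_num)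
    have hCS : (𝔼 x, A x ^ 2 * B x ^ 2) ^ 2 ≤ (𝔼 x, A x ^ 4) * 𝔼 x, B x ^ 4 := by
      have hCS' := expect_mul_sq_le_sq_mul_sq univ (fun x => A x ^ 2) (B · ^ 2)
      simp only [← pow_mul] at hCS'
      exact hCS'
    have hbound := add_six_mul_add_le (by positivity) (expect_nonneg fun x _ => sq_nonneg (A x))
      (expect_nonneg fun x _ => sq_nonneg (B x)) (expect_nonneg fun x _ => by positivity) hA hB hCS
    rwa [h2, h4]

end Bonami

theorem polynomial_exceeds_mean_general (d : ℕ) :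
    ∃ (αd βd : ℝ), 0 < αd ∧ 0 < βd ∧
      ∀ (n : ℕ) (a : Finset (Fin n) → ℝ), DegLE a d →
        (βd ≤ (1 / 2 ^ n : ℝ) * ∑ x : Fin n → Bool,
          (if ((1 / 2 ^ n : ℝ) * ∑ y : Fin n → Bool, mlEval a (fun i => pmOne (y i)))
              + αd * Real.sqrt
                (((1 / 2 ^ n : ℝ) * ∑ y : Fin n → Bool, (mlEval a (fun i => pmOne (y i))) ^ 2)
                  - ((1 / 2 ^ n : ℝ) * ∑ y : Fin n → Bool, mlEval a (fun i => pmOne (y i))) ^ 2)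
              ≤ mlEval a (fun i => pmOne (x i))
            then (1 : ℝ) else 0)) ∧
        (βd ≤ (1 / 2 ^ n : ℝ) * ∑ x : Fin n → Bool,
          (if ((1 / 2 ^ n : ℝ) * ∑ y : Fin n → Bool, mlEval a (fun i => pmOne (y i)))
              ≤ mlEval a (fun i => pmOne (x i))
            then (1 : ℝ) else 0)) := by
  refine ⟨1 / (16 * 3 ^ d), 1 / (64 * (3 ^ d) ^ 2), by positivity, by positivity, fun n a ha => ?_⟩
  simp only [cube_average_eq_expect, ← expect_sub_expect_sq]
  set μ := 𝔼 y : Fin n → Bool, mlEval a fun i => pmOne (y i)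
  have h4 : 𝔼 x : Fin n → Bool, (mlEval a (fun i => pmOne (x i)) - μ) ^ 4
      ≤ (3 ^ d) ^ 2 * (𝔼 x : Fin n → Bool, (mlEval a (fun i => pmOne (x i)) - μ) ^ 2) ^ 2 := by
    have h9 : (9 : ℝ) ^ d = (3 ^ d) ^ 2 := by rw [← pow_mul, mul_comm, pow_mul]; norm_num
    simpa only [mlEval_sub, mlEval_single_empty, h9] using
      expect_mlEval_pow_four_le (ha.sub_single_empty μ)
  have key := le_expect_boole_of_central_fourth_moment_le _ (one_le_pow₀ (by norm_num)) h4
  refine ⟨key, key.trans (expect_le_expect fun x _ => ?_)⟩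
  have hthreshold :
      0 ≤ 1 / (16 * 3 ^ d) * √(𝔼 y : Fin n → Bool, (mlEval a (fun i => pmOne (y i)) - μ) ^ 2) :=
    by positivity
  split_ifs <;> linarith

/-- Lemma 5.4: for each `d ≥ 1` there are constants `α_d, β_d > 0` such
that every multilinear polynomial `Q` of degree at most `d` satisfies
`Pr[Q(X) ≥ E[Q] + α_d σ(Q)] ≥ β_d` (and in particular `Pr[Q(X) ≥ E[Q]] ≥ β_d`) for `X`
uniform on `{-1,1}^n`. -/
theorem polynomial_exceeds_mean (d : ℕ) (hd : 1 ≤ d) :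
    ∃ (αd βd : ℝ), 0 < αd ∧ 0 < βd ∧
      ∀ (n : ℕ) (a : Finset (Fin n) → ℝ), DegLE a d →
        (βd ≤ (1 / 2 ^ n : ℝ) * ∑ x : Fin n → Bool,
          (if ((1 / 2 ^ n : ℝ) * ∑ y : Fin n → Bool, mlEval a (fun i => pmOne (y i)))
              + αd * Real.sqrt
                (((1 / 2 ^ n : ℝ) * ∑ y : Fin n → Bool, (mlEval a (fun i => pmOne (y i))) ^ 2)
                  - ((1 / 2 ^ n : ℝ) * ∑ y : Fin n → Bool, mlEval a (fun i => pmOne (y i))) ^ 2)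
              ≤ mlEval a (fun i => pmOne (x i))
            then (1 : ℝ) else 0)) ∧
        (βd ≤ (1 / 2 ^ n : ℝ) * ∑ x : Fin n → Bool,
          (if ((1 / 2 ^ n : ℝ) * ∑ y : Fin n → Bool, mlEval a (fun i => pmOne (y i)))
              ≤ mlEval a (fun i => pmOne (x i))
            then (1 : ℝ) else 0)) :=
  polynomial_exceeds_mean_general d

end
end

section
/- For every integer d ≥ 1 there exist constants c_d and A_d such that the following holds for every ε ∈ (0,1). Let P be a multilinear polynomial of degree at most d on n variables, with variables ordered so that w_1(P) ≥ … ≥ w_n(P), let L = ⌈c_d · log(1/ε)/ε²⌉, suppose the ε-critical index satisfies K(P,ε) ≥ L, and let Q = P − P_{|L}, where P_{|L}(X_1,…,X_L) = Σ_{I ⊆ [L]} a_I X^I is the restriction of P to its first L variables. Then ‖Q‖ ≤ A_d · √ε · ‖P_{|L}‖, where ‖R‖² = E_{X uniform on {-1,1}^n}[R(X)²]. -/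
open Finset MeasureTheory ProbabilityTheory
open scoped Classical

noncomputable section

/-!
Write `σ_k² = Σ_{j ≥ k} w_j²`. Below the critical index every step removes a coordinate of weight
`w_k² > ε² σ_k²`, so `σ_L² ≤ (1 - ε²)^L σ_0²`. Counting each coefficient once per tail variable it
contains, the tail mass `‖Q‖²` is at most `σ_L²`, while `σ_0² ≤ d ‖P‖²`. With
`L ≈ c log(1/ε) / ε²` the factor `(1 - ε²)^L ≤ e^{-ε² L}` is below `ε / (2(d+1))`, so
`‖Q‖² ≤ (ε/2) (‖P_{|L}‖² + ‖Q‖²)`, hence `‖Q‖² ≤ ε ‖P_{|L}‖²`.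
-/

open Real

section Weights

variable {n : ℕ} (a : Finset (Fin n) → ℝ)

lemma wsq_nonneg (i : Fin n) : 0 ≤ wsq a i :=
  sum_nonneg fun _ _ => sq_nonneg _

lemma sigmaSq_nonneg (k : ℕ) : 0 ≤ sigmaSq a k :=
  sum_nonneg fun i _ => wsq_nonneg a i

lemma sigmaSq_eq_sum_card_mul_sq (k : ℕ) :
    sigmaSq a k = ∑ I : Finset (Fin n), (#(I.filter fun i => k ≤ i.val) : ℝ) * a I ^ 2 := by
  unfold sigmaSq wsq
  simp_rw [sum_filter (fun I : Finset (Fin n) => _ ∈ I)]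
  rw [sum_comm]
  refine sum_congr rfl fun I _ => ?_
  rw [← sum_filter, sum_const, nsmul_eq_mul]
  congr 3
  ext j
  simp [and_comm]

lemma sum_sq_not_forall_lt_le_sigmaSq (k : ℕ) :
    ∑ I ∈ univ.filter (fun I : Finset (Fin n) => ¬ ∀ i ∈ I, i.val < k), a I ^ 2
      ≤ sigmaSq a k := by
  rw [sigmaSq_eq_sum_card_mul_sq, sum_filter]
  refine sum_le_sum fun I _ => ?_
  by_cases h : ∀ i ∈ I, i.val < k
  · rw [if_neg (not_not_intro h)]
    positivity
  · obtain ⟨i, hi, hki⟩ := not_forall₂.mp h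
    have hcard : (1 : ℝ) ≤ #(I.filter fun i => k ≤ i.val) :=
      Nat.one_le_cast.mpr (card_pos.mpr ⟨i, mem_filter.mpr ⟨hi, Nat.not_lt.mp hki⟩⟩)
    rw [if_pos h]
    nlinarith [sq_nonneg (a I)]

lemma sigmaSq_zero_le {d : ℕ} (hdeg : DegLE a d) :
    sigmaSq a 0 ≤ d * ∑ I : Finset (Fin n), a I ^ 2 := by
  rw [sigmaSq_eq_sum_card_mul_sq, mul_sum]
  refine sum_le_sum fun I _ => ?_
  by_cases hI : a I = 0
  · simp [hI]
  · have hcard : (#(I.filter fun i => 0 ≤ i.val) : ℝ) ≤ d := by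
      exact_mod_cast (card_filter_le _ _).trans (hdeg I hI)
    exact mul_le_mul_of_nonneg_right hcard (sq_nonneg _)

lemma sigmaSq_eq_wsq_add_sigmaSq_succ {k : ℕ} (hk : k < n) :
    sigmaSq a k = wsq a ⟨k, hk⟩ + sigmaSq a (k + 1) := by
  have hsplit : univ.filter (fun j : Fin n => k ≤ (j : ℕ))
      = insert ⟨k, hk⟩ (univ.filter fun j : Fin n => k + 1 ≤ (j : ℕ)) := by
    ext j
    simp only [mem_filter, mem_univ, true_and, mem_insert, Fin.ext_iff]
    omega
  rw [sigmaSq, hsplit, sum_insert (by simp)]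
  rfl

lemma exists_wsq_gt_of_lt_critIndex {ε : ℝ} {k : ℕ} (hk : k < critIndex a ε) :
    ∃ j : Fin n, k ≤ (j : ℕ) ∧ ε ^ 2 * sigmaSq a k < wsq a j := by
  simpa using Nat.notMem_of_lt_sInf hk

lemma sigmaSq_succ_le_of_lt_critIndex (hord : OrderedWeights a) {ε : ℝ} {k : ℕ}
    (hk : k < critIndex a ε) : sigmaSq a (k + 1) ≤ (1 - ε ^ 2) * sigmaSq a k := by
  obtain ⟨j, hkj, hj⟩ := exists_wsq_gt_of_lt_critIndex a hk
  have hkn : k < n := hkj.trans_lt j.isLt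
  have hwk : wsq a j ≤ wsq a ⟨k, hkn⟩ := hord _ _ hkj
  rw [sigmaSq_eq_wsq_add_sigmaSq_succ a hkn] at hj ⊢
  nlinarith

lemma sigmaSq_le_pow_mul_of_le_critIndex (hord : OrderedWeights a) {ε : ℝ} (hε : ε ^ 2 ≤ 1) :
    ∀ {L : ℕ}, L ≤ critIndex a ε → sigmaSq a L ≤ (1 - ε ^ 2) ^ L * sigmaSq a 0
  | 0, _ => by simp
  | L + 1, hL => calc
      sigmaSq a (L + 1) ≤ (1 - ε ^ 2) * sigmaSq a L :=
        sigmaSq_succ_le_of_lt_critIndex a hord hL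
      _ ≤ (1 - ε ^ 2) * ((1 - ε ^ 2) ^ L * sigmaSq a 0) :=
        mul_le_mul_of_nonneg_left (sigmaSq_le_pow_mul_of_le_critIndex hord hε (by omega))
          (sub_nonneg.mpr hε)
      _ = (1 - ε ^ 2) ^ (L + 1) * sigmaSq a 0 := by ring

end Weights

lemma one_sub_sq_pow_le_exp {ε : ℝ} (hε : ε ^ 2 ≤ 1) (L : ℕ) :
    (1 - ε ^ 2) ^ L ≤ exp (-(ε ^ 2 * L)) := calc
  (1 - ε ^ 2) ^ L ≤ exp (-ε ^ 2) ^ L :=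
    pow_le_pow_left₀ (sub_nonneg.mpr hε) (one_sub_le_exp_neg _) L
  _ = exp (-(ε ^ 2 * L)) := by rw [← exp_nat_mul]; ring_nf

lemma one_sub_sq_pow_le_div {ε D c : ℝ} {L : ℕ} (hε0 : 0 < ε) (hε1 : ε < 1) (hD : 1 ≤ D)
    (hc : 1 + 8 * D * log (2 * D) ≤ c) (hL : c * log (1 / ε) ≤ ε ^ 2 * L) :
    (1 - ε ^ 2) ^ L ≤ ε / (2 * D) := by
  have hlogε : 0 < log (1 / ε) := log_pos (by rw [lt_div_iff₀ hε0]; linarith)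
  have hlog2D : 0 ≤ log (2 * D) := log_nonneg (by linarith)
  have hε2 : ε ^ 2 ≤ 1 := by nlinarith
  have hc0 : 0 < c := by nlinarith [mul_nonneg (by linarith : (0 : ℝ) ≤ D) hlog2D]
  rw [le_div_iff₀ (by positivity)]
  by_cases hclose : (1 - ε) * (8 * D) ≤ 1
  · -- For `ε` this close to `1`, a single factor `1 - ε² ≤ 2 (1 - ε)` is already small enough.
    have hL0 : L ≠ 0 := by
      rintro rfl
      simp only [CharP.cast_eq_zero, mul_zero] at hL
      nlinarith [mul_pos hc0 hlogε]
    calc (1 - ε ^ 2) ^ L * (2 * D) ≤ (1 - ε ^ 2) * (2 * D) := by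
          gcongr
          exact pow_le_of_le_one (sub_nonneg.mpr hε2) (by nlinarith) hL0
      _ ≤ ε := by nlinarith
  · -- `1 - ε ≤ log (1/ε)` makes `8 D log (1/ε) ≥ 1`, so `ε² L ≥ log (1/ε) + log (2D)`.
    have hlog_ge : 1 - ε ≤ log (1 / ε) := by
      rw [one_div, log_inv]
      linarith [log_le_sub_one_of_pos hε0]
    have hexp : log (1 / ε) + log (2 * D) ≤ ε ^ 2 * L := by
      nlinarith [mul_nonneg hlog2D (by nlinarith : (0 : ℝ) ≤ 8 * D * log (1 / ε) - 1)]
    calc (1 - ε ^ 2) ^ L * (2 * D) ≤ exp (-(log (1 / ε) + log (2 * D))) * (2 * D) := by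
          gcongr
          exact (one_sub_sq_pow_le_exp hε2 L).trans (exp_le_exp.mpr (by linarith))
      _ = ε := by
          rw [neg_add, exp_add, one_div, log_inv, neg_neg, exp_log hε0, exp_neg,
            exp_log (by positivity)]
          field_simp

theorem tail_norm_small_general (d : ℕ) :
    ∃ (cd Ad : ℝ), ∀ (ε : ℝ), 0 < ε → ε < 1 →
      ∀ (n : ℕ) (a : Finset (Fin n) → ℝ), DegLE a d → OrderedWeights a →
        ∀ L : ℕ, L = ⌈cd * Real.log (1 / ε) / ε ^ 2⌉₊ → L ≤ critIndex a ε →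
          Real.sqrt (∑ I ∈ univ.filter
              (fun I : Finset (Fin n) => ¬ ∀ i ∈ I, i.val < L), a I ^ 2)
            ≤ Ad * Real.sqrt ε * Real.sqrt (∑ I ∈ univ.filter
              (fun I : Finset (Fin n) => ∀ i ∈ I, i.val < L), a I ^ 2) := by
  refine ⟨1 + 8 * (d + 1) * log (2 * (d + 1)), 1, ?_⟩
  intro ε hε0 hε1 n a hdeg hord L hL hLcrit
  set T := ∑ I ∈ univ.filter (fun I : Finset (Fin n) => ¬ ∀ i ∈ I, i.val < L), a I ^ 2
  set H := ∑ I ∈ univ.filter (fun I : Finset (Fin n) => ∀ i ∈ I, i.val < L), a I ^ 2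
  have hsum : H + T = ∑ I : Finset (Fin n), a I ^ 2 := sum_filter_add_sum_filter_not _ _ _
  have hpow : (1 - ε ^ 2) ^ L ≤ ε / (2 * (d + 1)) := by
    refine one_sub_sq_pow_le_div hε0 hε1 (by linarith [d.cast_nonneg (α := ℝ)]) le_rfl ?_
    rw [← div_le_iff₀' (by positivity), hL]
    exact Nat.le_ceil _
  have hT : T ≤ ε / 2 * (H + T) := calc
    T ≤ sigmaSq a L := sum_sq_not_forall_lt_le_sigmaSq a L
    _ ≤ (1 - ε ^ 2) ^ L * sigmaSq a 0 :=
      sigmaSq_le_pow_mul_of_le_critIndex a hord (by nlinarith) hLcrit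
    _ ≤ ε / (2 * (d + 1)) * ((d + 1) * (H + T)) := by
      refine mul_le_mul hpow ?_ (sigmaSq_nonneg a 0) (by positivity)
      rw [hsum]
      linarith [sigmaSq_zero_le a hdeg, sum_nonneg fun I (_ : I ∈ univ) => sq_nonneg (a I)]
    _ = ε / 2 * (H + T) := by field_simp
  have hH0 : 0 ≤ H := sum_nonneg fun I _ => sq_nonneg (a I)
  have hTH : T ≤ ε * H := by
    nlinarith [mul_nonneg (mul_nonneg hε0.le (sub_nonneg.mpr hε1.le)) hH0]
  calc √T ≤ √(ε * H) := sqrt_le_sqrt hTH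
    _ = 1 * √ε * √H := by rw [sqrt_mul hε0.le, one_mul]

/-- Claim 5.6: for each `d ≥ 1` there are constants `c_d, A_d` such that
if the `ε`-critical index of `P` is at least `L = ⌈c_d log(1/ε)/ε²⌉`, then the tail
`Q = P - P_{|L}` satisfies `‖Q‖ ≤ A_d √ε ‖P_{|L}‖`. -/
theorem tail_norm_small (d : ℕ) (hd : 1 ≤ d) :
    ∃ (cd Ad : ℝ), ∀ (ε : ℝ), 0 < ε → ε < 1 →
      ∀ (n : ℕ) (a : Finset (Fin n) → ℝ), DegLE a d → OrderedWeights a →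
        ∀ L : ℕ, L = ⌈cd * Real.log (1 / ε) / ε ^ 2⌉₊ → L ≤ critIndex a ε →
          Real.sqrt (∑ I ∈ univ.filter
              (fun I : Finset (Fin n) => ¬ ∀ i ∈ I, i.val < L), a I ^ 2)
            ≤ Ad * Real.sqrt ε * Real.sqrt (∑ I ∈ univ.filter
              (fun I : Finset (Fin n) => ∀ i ∈ I, i.val < L), a I ^ 2) :=
  tail_norm_small_general d

end
end

section
/- Let P(X) = Σ_{I ⊆ [n], 0 < |I| ≤ d} a_I X^I be a multilinear polynomial of degree at most d with zero constant term and with ‖P‖² = Σ_I a_I² ≤ 1, let θ ∈ R, and let f(x) = sign(P(x) − θ). Then for every ρ with 0 < ρ < 1 and every δ > 0, NS_ρ(f) ≤ (d+1)·δ + Pr_{X uniform on {-1,1}^n}[ |P(X) − θ| ≤ 2√ρ/δ ]. -/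
open Finset MeasureTheory ProbabilityTheory
open scoped Classical

noncomputable section

/-
If `f(x) ≠ f(z)` then either `P(x)` lies within `t` of `θ`, or `P` crosses `θ` between `x` and
`z` while `|P(x) - θ| > t`, forcing `|P(x) - P(z)| > t`. Markov's inequality therefore gives
`NS_ρ(f) ≤ Pr[|P(X) - θ| ≤ t] + E[(P(X) - P(Z))²] / t²`. Expanding `P` in the Walsh basis, flipping
the coordinates in `S` multiplies `χ_I` by `(-1)^|I ∩ S|`, so Parseval yields
`E[(P(X) - P(Z))²] = Σ_I a_I² · 2(1 - (1 - 2ρ)^|I|) ≤ 4ρd‖P‖²` by Bernoulli's inequality.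
With `t = 2√ρ/δ` the error term is `dδ² ≤ (d+1)δ` when `δ < 1`; for `δ ≥ 1` the claim is trivial.
-/

namespace NoiseSensitivity

variable {n : ℕ}

def chi (I : Finset (Fin n)) (x : Fin n → Bool) : ℝ := ∏ i ∈ I, pmOne (x i)

def flipBy (s x : Fin n → Bool) : Fin n → Bool := fun i => xor (s i) (x i)

def noiseWeight (ρ : ℝ) (s : Fin n → Bool) : ℝ := ∏ i, if s i then ρ else 1 - ρ

def meanSqNoiseChange (ρ : ℝ) (P : (Fin n → Bool) → ℝ) : ℝ :=
  (1 / 2 ^ n : ℝ) * ∑ x, ∑ s, noiseWeight ρ s * (P x - P (flipBy s x)) ^ 2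

lemma sum_prod_bool {R : Type*} [CommSemiring R] (g : Fin n → Bool → R) :
    ∑ x : Fin n → Bool, ∏ i, g i (x i) = ∏ i, (g i true + g i false) := by
  rw [← Fintype.prod_sum]
  simp only [Fintype.sum_bool]

lemma chi_eq_prod_univ (I : Finset (Fin n)) (x : Fin n → Bool) :
    chi I x = ∏ i, if i ∈ I then pmOne (x i) else 1 :=
  (Finset.prod_ite_mem_eq I _).symm

lemma sum_chi_mul_chi (I J : Finset (Fin n)) :
    ∑ x, chi I x * chi J x = if I = J then (2 : ℝ) ^ n else 0 := by
  simp_rw [chi_eq_prod_univ, ← Finset.prod_mul_distrib]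
  rw [sum_prod_bool fun i b => (if i ∈ I then pmOne b else 1) * (if i ∈ J then pmOne b else 1)]
  have hfactor (i : Fin n) :
      (if i ∈ I then pmOne true else 1) * (if i ∈ J then pmOne true else 1) +
        (if i ∈ I then pmOne false else 1) * (if i ∈ J then pmOne false else 1) =
      if (i ∈ I ↔ i ∈ J) then 2 else 0 := by
    by_cases hI : i ∈ I <;> by_cases hJ : i ∈ J <;> norm_num [pmOne, hI, hJ]
  simp_rw [hfactor]
  split_ifs with hIJ
  · simp [hIJ]
  · obtain ⟨i, hi⟩ : ∃ i, ¬(i ∈ I ↔ i ∈ J) := by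
      by_contra! h
      exact hIJ (Finset.ext h)
    exact Finset.prod_eq_zero (Finset.mem_univ i) (if_neg hi)

lemma sum_sq_sum_mul_chi (u : Finset (Fin n) → ℝ) :
    ∑ x, (∑ I, u I * chi I x) ^ 2 = 2 ^ n * ∑ I, u I ^ 2 := by
  simp_rw [sq, Finset.sum_mul_sum, Finset.sum_comm (γ := Fin n → Bool)]
  simp_rw [mul_mul_mul_comm _ (chi _ _), ← Finset.mul_sum, sum_chi_mul_chi, mul_ite, mul_zero,
    Finset.sum_ite_eq, Finset.mem_univ, if_true, Finset.mul_sum]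
  exact Finset.sum_congr rfl fun I _ => by ring

lemma noiseWeight_nonneg {ρ : ℝ} (hρ0 : 0 ≤ ρ) (hρ1 : ρ ≤ 1) (s : Fin n → Bool) :
    0 ≤ noiseWeight ρ s :=
  Finset.prod_nonneg fun i _ => by split_ifs <;> linarith

lemma sum_noiseWeight (ρ : ℝ) : ∑ s : Fin n → Bool, noiseWeight ρ s = 1 := by
  simp_rw [noiseWeight]
  rw [sum_prod_bool fun _ b => if b then ρ else 1 - ρ]
  simp

lemma sum_noiseWeight_mul_chi_not (ρ : ℝ) (I : Finset (Fin n)) :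
    ∑ s, noiseWeight ρ s * chi I (fun i => !s i) = (1 - 2 * ρ) ^ I.card := by
  simp_rw [noiseWeight, chi_eq_prod_univ, ← Finset.prod_mul_distrib]
  rw [sum_prod_bool fun i b => (if b then ρ else 1 - ρ) * (if i ∈ I then pmOne (!b) else 1),
    ← Finset.prod_const, ← Finset.prod_ite_mem_eq I fun _ => 1 - 2 * ρ]
  refine Finset.prod_congr rfl fun i _ => ?_
  by_cases hi : i ∈ I <;> simp [hi, pmOne]
  ring

lemma chi_flipBy (I : Finset (Fin n)) (s x : Fin n → Bool) :
    chi I (flipBy s x) = chi I (fun i => !s i) * chi I x := by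
  rw [chi, chi, chi, ← Finset.prod_mul_distrib]
  exact Finset.prod_congr rfl fun i _ => by
    unfold flipBy; cases s i <;> cases x i <;> norm_num [pmOne]

lemma chi_mul_self (I : Finset (Fin n)) (x : Fin n → Bool) : chi I x * chi I x = 1 := by
  rw [chi, ← Finset.prod_mul_distrib]
  exact Finset.prod_eq_one fun i _ => by cases x i <;> norm_num [pmOne]

lemma mlEval_sub_mlEval_flipBy (a : Finset (Fin n) → ℝ) (s x : Fin n → Bool) :
    mlEval a (fun i => pmOne (x i)) - mlEval a (fun i => pmOne (flipBy s x i)) =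
      ∑ I, a I * (1 - chi I (fun i => !s i)) * chi I x := by
  rw [mlEval, mlEval, ← Finset.sum_sub_distrib]
  refine Finset.sum_congr rfl fun I _ => ?_
  rw [← chi, ← chi, chi_flipBy]
  ring

lemma sum_noiseWeight_mul_one_sub_chi_not_sq (ρ : ℝ) (I : Finset (Fin n)) :
    ∑ s, noiseWeight ρ s * (1 - chi I (fun i => !s i)) ^ 2 = 2 * (1 - (1 - 2 * ρ) ^ I.card) := by
  have hsq (s : Fin n → Bool) :
      (1 - chi I (fun i => !s i)) ^ 2 = 2 - 2 * chi I (fun i => !s i) := by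
    linear_combination chi_mul_self I (fun i => !s i)
  simp_rw [hsq, mul_sub, Finset.sum_sub_distrib, mul_left_comm _ (2 : ℝ), ← Finset.mul_sum,
    mul_comm _ (2 : ℝ), ← Finset.mul_sum, sum_noiseWeight, sum_noiseWeight_mul_chi_not]

lemma meanSqNoiseChange_mlEval (a : Finset (Fin n) → ℝ) (ρ : ℝ) :
    meanSqNoiseChange ρ (fun x => mlEval a (fun i => pmOne (x i))) =
      ∑ I, a I ^ 2 * (2 * (1 - (1 - 2 * ρ) ^ I.card)) := by
  have hparseval (s : Fin n → Bool) :
      ∑ x, (mlEval a (fun i => pmOne (x i)) - mlEval a (fun i => pmOne (flipBy s x i))) ^ 2 =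
        2 ^ n * ∑ I, a I ^ 2 * (1 - chi I (fun i => !s i)) ^ 2 := by
    simp_rw [mlEval_sub_mlEval_flipBy, sum_sq_sum_mul_chi, mul_pow]
  rw [meanSqNoiseChange, Finset.sum_comm]
  simp_rw [← Finset.mul_sum, hparseval, Finset.mul_sum]
  rw [Finset.sum_comm]
  refine Finset.sum_congr rfl fun I _ => ?_
  rw [← sum_noiseWeight_mul_one_sub_chi_not_sq, Finset.mul_sum]
  exact Finset.sum_congr rfl fun s _ => by field_simp

lemma one_sub_one_sub_two_mul_pow_le {ρ : ℝ} (hρ1 : ρ ≤ 1) (k : ℕ) :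
    1 - (1 - 2 * ρ) ^ k ≤ 2 * ρ * k := by
  have := one_add_mul_le_pow (show (-2 : ℝ) ≤ -(2 * ρ) by linarith) k
  rw [← sub_eq_add_neg] at this
  linarith

lemma meanSqNoiseChange_mlEval_le {a : Finset (Fin n) → ℝ} {d : ℕ} (hdeg : DegLE a d) {ρ : ℝ}
    (hρ0 : 0 ≤ ρ) (hρ1 : ρ ≤ 1) :
    meanSqNoiseChange ρ (fun x => mlEval a (fun i => pmOne (x i))) ≤
      4 * ρ * d * ∑ I, a I ^ 2 := by
  rw [meanSqNoiseChange_mlEval, Finset.mul_sum]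
  refine Finset.sum_le_sum fun I _ => ?_
  rcases eq_or_ne (a I) 0 with hI | hI
  · simp [hI]
  have hcard : (I.card : ℝ) ≤ d := by exact_mod_cast hdeg I hI
  have := one_sub_one_sub_two_mul_pow_le hρ1 I.card
  have : 2 * (1 - (1 - 2 * ρ) ^ I.card) ≤ 4 * ρ * d := by nlinarith
  nlinarith [sq_nonneg (a I)]

lemma noiseSens_le_one {ρ : ℝ} (hρ0 : 0 ≤ ρ) (hρ1 : ρ ≤ 1) (f : (Fin n → Bool) → Bool) :
    noiseSens ρ f ≤ 1 := by
  calc noiseSens ρ f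
      ≤ (1 / 2 ^ n : ℝ) * ∑ _x : Fin n → Bool, ∑ s, noiseWeight ρ s := by
        refine mul_le_mul_of_nonneg_left (Finset.sum_le_sum fun x _ =>
          Finset.sum_le_sum fun s _ => ?_) (by positivity)
        exact mul_le_of_le_one_right (noiseWeight_nonneg hρ0 hρ1 s) (by split_ifs <;> norm_num)
    _ = 1 := by simp [sum_noiseWeight]

lemma abs_sub_le_abs_sub_of_crossing {p q θ : ℝ} (hcross : 0 ≤ p - θ ↔ ¬0 ≤ q - θ) :
    |p - θ| ≤ |p - q| := by
  rcases le_or_gt 0 (p - θ) with hp | hp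
  · have := hcross.mp hp
    rw [abs_of_nonneg hp]
    exact le_abs.mpr (Or.inl (by linarith))
  · have := not_not.mp (mt hcross.mpr hp.not_ge)
    rw [abs_of_neg hp]
    exact le_abs.mpr (Or.inr (by linarith))

lemma indicator_ne_le_of_threshold {b c : Bool} {p q θ t : ℝ} (ht : 0 < t)
    (hb : b = true ↔ 0 ≤ p - θ) (hc : c = true ↔ 0 ≤ q - θ) :
    (if b ≠ c then (1 : ℝ) else 0) ≤ (if |p - θ| ≤ t then 1 else 0) + (p - q) ^ 2 / t ^ 2 := by
  have hsq : 0 ≤ (p - q) ^ 2 / t ^ 2 := by positivity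
  by_cases hnear : |p - θ| ≤ t
  · rw [if_pos hnear]
    split_ifs <;> linarith
  by_cases hbc : b = c
  · simp only [hbc, ne_eq, not_true_eq_false, if_false]
    positivity
  have hcross : 0 ≤ p - θ ↔ ¬0 ≤ q - θ := by
    rw [← hb, ← hc]
    cases b <;> cases c <;> simp_all
  have hfar : t < |p - q| := (not_le.mp hnear).trans_le (abs_sub_le_abs_sub_of_crossing hcross)
  rw [if_pos hbc, if_neg hnear, zero_add, one_le_div (by positivity), ← sq_abs (p - q)]
  exact pow_le_pow_left₀ ht.le hfar.le 2

lemma noiseSens_le_near_add_meanSqNoiseChange {ρ : ℝ} (hρ0 : 0 ≤ ρ) (hρ1 : ρ ≤ 1)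
    {f : (Fin n → Bool) → Bool} {P : (Fin n → Bool) → ℝ} {θ t : ℝ}
    (hf : ∀ x, f x = true ↔ 0 ≤ P x - θ) (ht : 0 < t) :
    noiseSens ρ f ≤ (1 / 2 ^ n : ℝ) * ∑ x, (if |P x - θ| ≤ t then (1 : ℝ) else 0) +
      meanSqNoiseChange ρ P / t ^ 2 := by
  calc noiseSens ρ f
      ≤ (1 / 2 ^ n : ℝ) * ∑ x, ∑ s, noiseWeight ρ s *
          ((if |P x - θ| ≤ t then (1 : ℝ) else 0) + (P x - P (flipBy s x)) ^ 2 / t ^ 2) := by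
        refine mul_le_mul_of_nonneg_left (Finset.sum_le_sum fun x _ =>
          Finset.sum_le_sum fun s _ => ?_) (by positivity)
        exact mul_le_mul_of_nonneg_left (indicator_ne_le_of_threshold ht (hf x) (hf _))
          (noiseWeight_nonneg hρ0 hρ1 s)
    _ = _ := by
        simp_rw [mul_add, Finset.sum_add_distrib, ← Finset.sum_mul, sum_noiseWeight, one_mul,
          mul_div_assoc', ← Finset.sum_div, meanSqNoiseChange]
        ring

end NoiseSensitivity

theorem noise_sensitivity_vs_anticoncentration_general (n d : ℕ) (a : Finset (Fin n) → ℝ)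
    (θ : ℝ) (hdeg : DegLE a d) (hnorm : ∑ I, a I ^ 2 ≤ 1)
    (f : (Fin n → Bool) → Bool)
    (hf : ∀ x, (f x = true ↔ 0 ≤ mlEval a (fun i => pmOne (x i)) - θ))
    (ρ δ : ℝ) (hρ0 : 0 < ρ) (hρ1 : ρ < 1) (hδ : 0 < δ) :
    noiseSens ρ f ≤ ((d : ℝ) + 1) * δ +
      (1 / 2 ^ n : ℝ) * ∑ x : Fin n → Bool,
        (if |mlEval a (fun i => pmOne (x i)) - θ| ≤ 2 * Real.sqrt ρ / δ
          then (1 : ℝ) else 0) := by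
  set near := (1 / 2 ^ n : ℝ) * ∑ x : Fin n → Bool,
    (if |mlEval a (fun i => pmOne (x i)) - θ| ≤ 2 * Real.sqrt ρ / δ then (1 : ℝ) else 0)
  have hnear : 0 ≤ near := by positivity
  have hd : (0 : ℝ) ≤ d := d.cast_nonneg
  rcases le_or_gt 1 δ with hδ1 | hδ1
  · have := NoiseSensitivity.noiseSens_le_one hρ0.le hρ1.le f
    nlinarith
  have ht : 0 < 2 * Real.sqrt ρ / δ := by positivity
  have hmean : NoiseSensitivity.meanSqNoiseChange ρ (fun x => mlEval a (fun i => pmOne (x i))) ≤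
      4 * ρ * d :=
    (NoiseSensitivity.meanSqNoiseChange_mlEval_le hdeg hρ0.le hρ1.le).trans
      (mul_le_of_le_one_right (by positivity) hnorm)
  calc noiseSens ρ f
      ≤ near + NoiseSensitivity.meanSqNoiseChange ρ (fun x => mlEval a (fun i => pmOne (x i))) /
          (2 * Real.sqrt ρ / δ) ^ 2 :=
        NoiseSensitivity.noiseSens_le_near_add_meanSqNoiseChange hρ0.le hρ1.le hf ht
    _ ≤ near + 4 * ρ * d / (2 * Real.sqrt ρ / δ) ^ 2 := by gcongr
    _ = near + d * δ ^ 2 := by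
        rw [div_pow, mul_pow, Real.sq_sqrt hρ0.le]
        field_simp
        ring
    _ ≤ ((d : ℝ) + 1) * δ + near := by
        nlinarith [mul_nonneg hd (mul_nonneg hδ.le (sub_nonneg.mpr hδ1.le))]

/-- Lemma 6.1: for `f = sign(P - θ)` with `P` multilinear of degree at
most `d`, zero constant term and `‖P‖² ≤ 1`, for all `0 < ρ < 1` and `δ > 0`,
`NS_ρ(f) ≤ (d+1)δ + Pr[|P(X) - θ| ≤ 2√ρ/δ]`. -/
theorem noise_sensitivity_vs_anticoncentration (n d : ℕ) (a : Finset (Fin n) → ℝ)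
    (θ : ℝ) (hdeg : DegLE a d) (hconst : a ∅ = 0) (hnorm : ∑ I, a I ^ 2 ≤ 1)
    (f : (Fin n → Bool) → Bool)
    (hf : ∀ x, (f x = true ↔ 0 ≤ mlEval a (fun i => pmOne (x i)) - θ))
    (ρ δ : ℝ) (hρ0 : 0 < ρ) (hρ1 : ρ < 1) (hδ : 0 < δ) :
    noiseSens ρ f ≤ ((d : ℝ) + 1) * δ +
      (1 / 2 ^ n : ℝ) * ∑ x : Fin n → Bool,
        (if |mlEval a (fun i => pmOne (x i)) - θ| ≤ 2 * Real.sqrt ρ / δ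
          then (1 : ℝ) else 0) :=
  noise_sensitivity_vs_anticoncentration_general n d a θ hdeg hnorm f hf ρ δ hρ0 hρ1 hδ
end
end
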